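/- arXiv:2510.15941 — 11 statements merged into one kernel-verified Lean document; each statement's English description precedes it below -/
import Mathlib

section
/- Let π⁰, π¹, γ, τ > 0 satisfy τ·ρ < π⁰/π¹, where ρ = 1/π¹ + 1/γ. Then the function f(q,a) = π⁰q − (π¹/2)q² − (γ/2)((1−e^{−a})q)² − τ·e^{−a}q has a unique global maximizer (q*, a*) over (q,a) ∈ ℝ², given by q* = π⁰/π¹ − τ/π¹ and e^{−a*} = (π⁰/π¹ − τρ)/q*. Moreover q* > 0, a* > 0, the optimal emissions equal e^{−a*}q* = π⁰/π¹ − τρ, and the maximum value is f(q*,a*) = (π⁰)²/(2π¹) − τ(π⁰/π¹ − (τ/2)ρ). -/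
set_option maxHeartbeats 800000

open Real

/-- Under the tax scheme, the company's wealth function
`f(q,a) = π⁰q − (π¹/2)q² − (γ/2)((1−e^{−a})q)² − τ·e^{−a}q`
has a unique global maximizer `(q*, a*)` with `q* = π⁰/π¹ − τ/π¹` and
`e^{−a*} = (π⁰/π¹ − τρ)/q*`; moreover `q* > 0`, `a* > 0`, the optimal
emissions are `e^{−a*}q* = π⁰/π¹ − τρ`, and the maximum value is
`(π⁰)²/(2π¹) − τ(π⁰/π¹ − (τ/2)ρ)`. -/
theorem tax_scheme_unique_global_maximizer
    (π0 π1 γ τ : ℝ) (hπ0 : 0 < π0) (hπ1 : 0 < π1) (hγ : 0 < γ) (hτ : 0 < τ)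
    (ρ : ℝ) (hρ : ρ = 1 / π1 + 1 / γ)
    (hass : τ * ρ < π0 / π1)
    (f : ℝ → ℝ → ℝ)
    (hf : ∀ q a, f q a =
      π0 * q - π1 / 2 * q ^ 2 - γ / 2 * ((1 - exp (-a)) * q) ^ 2 - τ * exp (-a) * q)
    (qstar astar : ℝ)
    (hqstar : qstar = π0 / π1 - τ / π1)
    (hastar : exp (-astar) = (π0 / π1 - τ * ρ) / qstar) :
    (∀ q a : ℝ, f q a ≤ f qstar astar) ∧
    (∀ q a : ℝ, f q a = f qstar astar → q = qstar ∧ a = astar) ∧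
    0 < qstar ∧ 0 < astar ∧
    exp (-astar) * qstar = π0 / π1 - τ * ρ ∧
    f qstar astar = π0 ^ 2 / (2 * π1) - τ * (π0 / π1 - τ / 2 * ρ) := by
  have hρ' : τ * ρ = τ / π1 + τ / γ := by rw [hρ]; ring
  have hτγ : 0 < τ / γ := div_pos hτ hγ
  have hq : 0 < qstar := by
    rw [hqstar]; rw [hρ'] at hass; linarith
  have hqne : qstar ≠ 0 := ne_of_gt hq
  -- optimal emissions
  have hE : exp (-astar) * qstar = π0 / π1 - τ * ρ := by
    rw [hastar, div_mul_cancel₀ _ hqne]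
  have hEq2 : exp (-astar) * qstar = qstar - τ / γ := by
    rw [hE, hqstar, hρ']; ring
  have h1 : (1 - exp (-astar)) * qstar = τ / γ := by
    have := hEq2; nlinarith [hEq2]
  -- key identity
  have key : ∀ q a : ℝ, f qstar astar - f q a =
      π1 / 2 * (q - qstar) ^ 2 + γ / 2 * ((1 - exp (-a)) * q - τ / γ) ^ 2 := by
    intro q a
    rw [hf, hf, h1,
      show τ * exp (-astar) * qstar = τ * (qstar - τ / γ) by rw [mul_assoc, hEq2],
      hqstar]
    field_simp
    ring
  have hle : ∀ q a : ℝ, f q a ≤ f qstar astar := by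
    intro q a
    have h := key q a
    nlinarith [sq_nonneg (q - qstar), sq_nonneg ((1 - exp (-a)) * q - τ / γ)]
  refine ⟨hle, ?_, hq, ?_, hE, ?_⟩
  · intro q a heq
    have h := key q a
    rw [heq, sub_self] at h
    have hA : 0 ≤ π1 / 2 * (q - qstar) ^ 2 := by positivity
    have hB : 0 ≤ γ / 2 * ((1 - exp (-a)) * q - τ / γ) ^ 2 := by positivity
    have hA0 : π1 / 2 * (q - qstar) ^ 2 = 0 := by linarith
    have hB0 : γ / 2 * ((1 - exp (-a)) * q - τ / γ) ^ 2 = 0 := by linarith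
    have hs1 : (q - qstar) ^ 2 = 0 := by
      rcases mul_eq_zero.mp hA0 with h' | h'
      · exfalso; have : (0:ℝ) < π1 / 2 := by positivity
        linarith
      · exact h'
    have hs2 : ((1 - exp (-a)) * q - τ / γ) ^ 2 = 0 := by
      rcases mul_eq_zero.mp hB0 with h' | h'
      · exfalso; have : (0:ℝ) < γ / 2 := by positivity
        linarith
      · exact h'
    have hq1 : q = qstar := by
      have := sq_eq_zero_iff.mp hs1
      linarith [this]
    refine ⟨hq1, ?_⟩
    have hq2 : (1 - exp (-a)) * qstar = τ / γ := by
      have := sq_eq_zero_iff.mp hs2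
      rw [hq1] at this; linarith [this]
    have hxeq : exp (-a) = exp (-astar) := by
      have : (1 - exp (-a)) * qstar = (1 - exp (-astar)) * qstar := by rw [hq2, h1]
      have h3 := mul_right_cancel₀ hqne this
      linarith
    have := Real.exp_injective hxeq
    linarith [neg_injective this]
  · -- astar > 0
    have hx1 : exp (-astar) < 1 := by
      have h' : exp (-astar) * qstar < 1 * qstar := by
        rw [hEq2, one_mul]; linarith
      exact lt_of_mul_lt_mul_right h' (le_of_lt hq)
    have h2 : exp (-astar) < exp 0 := by rwa [Real.exp_zero]
    have := Real.exp_lt_exp.mp h2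
    linarith
  · rw [hf, h1,
      show τ * exp (-astar) * qstar = τ * (qstar - τ / γ) by rw [mul_assoc, hEq2],
      hqstar, hρ]
    field_simp
    ring
end

section
/- Let π⁰, π¹, γ, λ > 0 and 0 < P < λ satisfy λ·ρ < π⁰/π¹, where ρ = 1/π¹ + 1/γ. Then the function g(q,a,δ) = π⁰q − (π¹/2)q² − (γ/2)((1−e^{−a})q)² − δP − λ·max(q·e^{−a} − δ, 0) has a unique global maximizer over (q,a,δ) ∈ ℝ³, given by q* = π⁰/π¹ − P/π¹, e^{−a*} = (π⁰/π¹ − Pρ)/q*, and δ* = π⁰/π¹ − Pρ = e^{−a*}q* (so the certificate demand equals the optimal emissions). The maximum value is (π⁰)²/(2π¹) − P(π⁰/π¹ − (P/2)ρ). -/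
set_option maxHeartbeats 1000000


open Real

/-- Under the market scheme with certificate price `P` and
penalty `λ` (here `lam`), the company's wealth function
`g(q,a,δ) = π⁰q − (π¹/2)q² − (γ/2)((1−e^{−a})q)² − δP − λ·max(q·e^{−a} − δ, 0)`
has a unique global maximizer over `ℝ³`, given by `q* = π⁰/π¹ − P/π¹`,
`e^{−a*} = (π⁰/π¹ − Pρ)/q*`, and `δ* = π⁰/π¹ − Pρ = e^{−a*}q*`, with maximum
value `(π⁰)²/(2π¹) − P(π⁰/π¹ − (P/2)ρ)`. -/
theorem market_scheme_unique_global_maximizer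
    (π0 π1 γ lam P : ℝ) (hπ0 : 0 < π0) (hπ1 : 0 < π1) (hγ : 0 < γ)
    (hP : 0 < P) (hPlam : P < lam)
    (ρ : ℝ) (hρ : ρ = 1 / π1 + 1 / γ)
    (hass : lam * ρ < π0 / π1)
    (g : ℝ → ℝ → ℝ → ℝ)
    (hg : ∀ q a δ, g q a δ =
      π0 * q - π1 / 2 * q ^ 2 - γ / 2 * ((1 - exp (-a)) * q) ^ 2
        - δ * P - lam * max (q * exp (-a) - δ) 0)
    (qstar astar δstar : ℝ)
    (hqstar : qstar = π0 / π1 - P / π1)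
    (hastar : exp (-astar) = (π0 / π1 - P * ρ) / qstar)
    (hδstar : δstar = π0 / π1 - P * ρ) :
    (∀ q a δ : ℝ, g q a δ ≤ g qstar astar δstar) ∧
    (∀ q a δ : ℝ, g q a δ = g qstar astar δstar → q = qstar ∧ a = astar ∧ δ = δstar) ∧
    δstar = exp (-astar) * qstar ∧
    g qstar astar δstar = π0 ^ 2 / (2 * π1) - P * (π0 / π1 - P / 2 * ρ) := by
  have hπ1' : π1 ≠ 0 := hπ1.ne'
  have hγ' : γ ≠ 0 := hγ.ne'
  have hPπ0 : P < π0 := by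
    have h1 : lam * (1/π1) < lam * ρ := by
      rw [hρ]
      have : (0:ℝ) < 1/γ := by positivity
      nlinarith
    have h2 : P * (1/π1) < π0 * (1/π1) := by
      have : lam * (1/π1) < π0 * (1/π1) := by
        calc lam * (1/π1) < lam * ρ := h1
        _ < π0 / π1 := hass
        _ = π0 * (1/π1) := by ring
      have hPl : P * (1/π1) < lam * (1/π1) := by
        have : (0:ℝ) < 1/π1 := by positivity
        nlinarith
      linarith
    have : (0:ℝ) < 1/π1 := by positivity
    nlinarith
  have hq0 : 0 < qstar := by
    have h : 0 < π0 - P := by linarith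
    rw [hqstar, div_sub_div_same]; positivity
  have hδ0 : 0 < δstar := by
    rw [hδstar]
    have : P * ρ < lam * ρ := by
      have hρ0 : 0 < ρ := by rw [hρ]; positivity
      nlinarith
    linarith
  have hq0' : qstar ≠ 0 := hq0.ne'
  have hustar : exp (-astar) * qstar = δstar := by
    rw [hastar, hδstar]; field_simp
  -- slack facts for the max term
  have slack1 : ∀ x : ℝ, 0 ≤ lam * max x 0 - P * x := by
    intro x
    rcases le_or_gt x 0 with h | h
    · rw [max_eq_right h]; nlinarith
    · rw [max_eq_left h.le]; nlinarith
  have slack1' : ∀ x : ℝ, lam * max x 0 - P * x = 0 → x = 0 := by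
    intro x hx
    rcases lt_trichotomy x 0 with h | h | h
    · rw [max_eq_right h.le] at hx; nlinarith
    · exact h
    · rw [max_eq_left h.le] at hx; nlinarith
  -- quadratic pieces
  have s2 : ∀ q : ℝ, (π0 - P) * q - π1/2 * q^2 ≤ (π0 - P)^2 / (2*π1) := by
    intro q
    have h := sq_nonneg (π1 * q - (π0 - P))
    rw [le_div_iff₀ (by positivity : (0:ℝ) < 2*π1)]
    nlinarith
  have s2' : ∀ q : ℝ, (π0 - P) * q - π1/2 * q^2 = (π0 - P)^2 / (2*π1) → q = (π0 - P)/π1 := by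
    intro q hq
    have h2 : (π1 * q - (π0 - P))^2 = 0 := by field_simp at hq; nlinarith
    have := pow_eq_zero_iff (n := 2) (by norm_num) |>.mp h2
    field_simp
    linarith
  have s3 : ∀ v : ℝ, P * v - γ/2 * v^2 ≤ P^2 / (2*γ) := by
    intro v
    have h := sq_nonneg (γ * v - P)
    rw [le_div_iff₀ (by positivity : (0:ℝ) < 2*γ)]
    nlinarith
  have s3' : ∀ v : ℝ, P * v - γ/2 * v^2 = P^2 / (2*γ) → v = P/γ := by
    intro v hv
    have h2 : (γ * v - P)^2 = 0 := by field_simp at hv; nlinarith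
    have := pow_eq_zero_iff (n := 2) (by norm_num) |>.mp h2
    field_simp
    linarith
  -- decomposition identity
  have decomp : ∀ q a δ : ℝ, g q a δ =
      ((π0 - P) * q - π1/2 * q^2) + (P * ((1 - exp (-a)) * q) - γ/2 * ((1 - exp (-a)) * q)^2)
        - (lam * max (q * exp (-a) - δ) 0 - P * (q * exp (-a) - δ)) := by
    intro q a δ
    rw [hg]; ring
  -- value of M
  have hM : (π0 - P)^2 / (2*π1) + P^2 / (2*γ)
      = π0 ^ 2 / (2 * π1) - P * (π0 / π1 - P / 2 * ρ) := by
    rw [hρ]; ring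
  -- value at star point
  have hvstar : (1 - exp (-astar)) * qstar = P/γ := by
    have : (1 - exp (-astar)) * qstar = qstar - δstar := by
      rw [sub_mul, one_mul, hustar]
    rw [this, hqstar, hδstar, hρ]; ring
  have hxstar : qstar * exp (-astar) - δstar = 0 := by
    rw [mul_comm, hustar]; ring
  have hval : g qstar astar δstar = (π0 - P)^2 / (2*π1) + P^2 / (2*γ) := by
    rw [decomp, hxstar, max_self, hvstar]
    have hq : qstar = (π0 - P)/π1 := by rw [hqstar]; ring
    rw [hq]
    field_simp
    ring
  refine ⟨?_, ?_, hustar.symm, by rw [hval, hM]⟩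
  · intro q a δ
    rw [hval, decomp]
    have h1 := slack1 (q * exp (-a) - δ)
    have h2 := s2 q
    have h3 := s3 ((1 - exp (-a)) * q)
    linarith
  · intro q a δ heq
    rw [hval, decomp] at heq
    have h1 := slack1 (q * exp (-a) - δ)
    have h2 := s2 q
    have h3 := s3 ((1 - exp (-a)) * q)
    have e2 : (π0 - P) * q - π1/2 * q^2 = (π0 - P)^2 / (2*π1) := by linarith
    have e3 : P * ((1 - exp (-a)) * q) - γ/2 * ((1 - exp (-a)) * q)^2 = P^2 / (2*γ) := by linarith
    have e1 : lam * max (q * exp (-a) - δ) 0 - P * (q * exp (-a) - δ) = 0 := by linarith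
    have hqq : q = qstar := by
      rw [hqstar]; rw [s2' q e2]; field_simp
    have hvv : (1 - exp (-a)) * q = P/γ := s3' _ e3
    have hxx : q * exp (-a) - δ = 0 := slack1' _ e1
    have huq : exp (-a) * q = q - P/γ := by
      have : (1 - exp (-a)) * q = q - exp (-a) * q := by ring
      rw [this] at hvv; linarith
    have hδδ : δ = δstar := by
      have : δ = exp (-a) * q := by linarith [hxx]; 
      rw [this, huq, hqq, hqstar, hδstar, hρ]
      ring
    have haa : a = astar := by
      have h1 : exp (-a) * qstar = δstar := by
        rw [← hqq, huq, hqq, hqstar, hδstar, hρ]; ring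
      have h2 : exp (-a) = exp (-astar) := by
        have h3 : exp (-a) * qstar = exp (-astar) * qstar := by rw [h1, hustar]
        exact mul_right_cancel₀ hq0' h3
      have := Real.exp_injective h2
      linarith
    exact ⟨hqq, haa, hδδ⟩
end

section
/- Consider N companies with parameters π⁰_i, π¹_i, γ_i > 0, ρ_i = 1/π¹_i + 1/γ_i, E^bau_i = π⁰_i/π¹_i, W^bau_i = (π⁰_i)²/(2π¹_i); set ρ = Σ_i ρ_i, E^bau = Σ_i E^bau_i. Let 0 < A < E^bau, τ = (E^bau − A)/ρ, and assume τρ_i < E^bau_i for every i. Then: (i) aggregate optimal emissions under the tax scheme equal the cap: Σ_i (E^bau_i − τρ_i) = A; (ii) the aggregate optimal company wealth is W^tax_C = Σ_i W^bau_i − τ(E^bau − (τ/2)ρ) and the regulator's wealth is W^tax_R = τA; (iii) if moreover λ > τ with λρ_i < E^bau_i for all i and, under the market scheme, every company buys certificates directly at the auction, then the clearing spot price is S = τ, each company's optimal market wealth W^bau_i − S(E^bau_i − (S/2)ρ_i) equals its optimal tax wealth W^bau_i − τ(E^bau_i − (τ/2)ρ_i), the aggregate certificate demand Σ_i (E^bau_i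 − Sρ_i) equals A, and the regulator's market wealth S·A equals W^tax_R. -/
/-! Aggregate emissions `E^bau − pρ` are affine in the price `p` with slope `−ρ < 0`, so the
calibrated tax rate `τ` is the unique price at which they meet the cap `A`; a spot market
clearing at `S = τ` then reproduces the tax outcome company by company. -/

open Finset

section Aggregation

variable {ι R : Type*} (s : Finset ι)

theorem sum_sub_mul_eq [CommRing R] (E ρ : ι → R) (p : R) :
    ∑ i ∈ s, (E i - p * ρ i) = ∑ i ∈ s, E i - p * ∑ i ∈ s, ρ i := by
  rw [sum_sub_distrib, mul_sum]

theorem sum_sub_mul_sub_half_mul_eq [Field R] (W E ρ : ι → R) (p : R) :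
    ∑ i ∈ s, (W i - p * (E i - p / 2 * ρ i))
      = ∑ i ∈ s, W i - p * (∑ i ∈ s, E i - p / 2 * ∑ i ∈ s, ρ i) := by
  rw [sum_sub_mul_eq, sum_sub_mul_eq]

end Aggregation

theorem sub_mul_eq_iff_eq_div {K : Type*} [Field K] {E ρ A p : K} (hρ : ρ ≠ 0) :
    E - p * ρ = A ↔ p = (E - A) / ρ := by
  rw [eq_div_iff hρ]
  constructor <;> intro h <;> linear_combination -h

theorem tax_vs_spot_market_equivalence_general
    {N : ℕ} (π1 γ : Fin N → ℝ)
    (hπ1 : ∀ i, 0 < π1 i) (hγ : ∀ i, 0 < γ i)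
    (ρ Ebau W : Fin N → ℝ)
    (hρ : ∀ i, ρ i = 1 / π1 i + 1 / γ i)
    (ρtot Etot : ℝ) (hρtot : ρtot = ∑ i, ρ i) (hEtot : Etot = ∑ i, Ebau i)
    (A : ℝ) (hA0 : 0 < A) (hA : A < Etot)
    (τ : ℝ) (hτ : τ = (Etot - A) / ρtot) :
    -- (i) aggregate tax emissions hit the cap
    (∑ i, (Ebau i - τ * ρ i)) = A ∧
    -- (ii) aggregate company wealth and regulator wealth under the tax scheme
    (∑ i, (W i - τ * (Ebau i - τ / 2 * ρ i)))
      = (∑ i, W i) - τ * (Etot - τ / 2 * ρtot) ∧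
    -- (iii) spot market scheme: identical outcomes
    (∀ lam : ℝ, τ < lam → (∀ i, lam * ρ i < Ebau i) →
      (τ ∈ Set.Ioc 0 lam ∧
       (∑ i, (Ebau i - τ * ρ i)) = A ∧
       (∀ S ∈ Set.Ioc 0 lam, (∑ i, (Ebau i - S * ρ i)) = A → S = τ)) ∧
      (∀ S : ℝ, S = τ →
        (∀ i, W i - S * (Ebau i - S / 2 * ρ i) = W i - τ * (Ebau i - τ / 2 * ρ i)) ∧
        (∑ i, (Ebau i - S * ρ i)) = A ∧
        S * A = τ * A)) := by
  have hρ_pos (i : Fin N) : 0 < ρ i := by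
    have := hπ1 i; have := hγ i
    rw [hρ i]; positivity
  have hne : (univ : Finset (Fin N)).Nonempty :=
    nonempty_of_sum_ne_zero (f := Ebau) (by linarith)
  have hρtot_pos : 0 < ρtot := hρtot ▸ sum_pos (fun i _ => hρ_pos i) hne
  have hτ_pos : 0 < τ := hτ ▸ div_pos (by linarith) hρtot_pos
  have hclear (S : ℝ) : ∑ i, (Ebau i - S * ρ i) = A ↔ S = τ := by
    rw [sum_sub_mul_eq, ← hEtot, ← hρtot, hτ]
    exact sub_mul_eq_iff_eq_div hρtot_pos.ne'
  refine ⟨(hclear τ).2 rfl, by rw [sum_sub_mul_sub_half_mul_eq, hEtot, hρtot], ?_⟩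
  intro lam hlam _
  refine ⟨⟨⟨hτ_pos, hlam.le⟩, (hclear τ).2 rfl, fun S _ hS => (hclear S).1 hS⟩, ?_⟩
  rintro S rfl
  exact ⟨fun _ => rfl, (hclear S).2 rfl, rfl⟩

/-- With the tax rate calibrated as `τ = (E^bau − A)/ρ`:
(i) aggregate optimal emissions under the tax scheme equal the cap `A`;
(ii) the aggregate optimal company wealth is `ΣW^bau_i − τ(E^bau − (τ/2)ρ)`
and the regulator's tax wealth is `τA`; (iii) if `λ > τ` with `λρ_i < E^bau_i`
and all companies buy directly at the auction, the clearing spot price is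
`S = τ` (it clears, lies in `(0, λ]`, and is the unique such price), each
company's optimal market wealth equals its optimal tax wealth, the aggregate
certificate demand equals `A`, and the regulator's market wealth `S·A`
equals `τA`. -/
theorem tax_vs_spot_market_equivalence
    {N : ℕ} (π0 π1 γ : Fin N → ℝ)
    (hπ0 : ∀ i, 0 < π0 i) (hπ1 : ∀ i, 0 < π1 i) (hγ : ∀ i, 0 < γ i)
    (ρ Ebau W : Fin N → ℝ)
    (hρ : ∀ i, ρ i = 1 / π1 i + 1 / γ i)
    (hEbau : ∀ i, Ebau i = π0 i / π1 i)
    (hW : ∀ i, W i = (π0 i) ^ 2 / (2 * π1 i))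
    (ρtot Etot : ℝ) (hρtot : ρtot = ∑ i, ρ i) (hEtot : Etot = ∑ i, Ebau i)
    (A : ℝ) (hA0 : 0 < A) (hA : A < Etot)
    (τ : ℝ) (hτ : τ = (Etot - A) / ρtot)
    (hτfeas : ∀ i, τ * ρ i < Ebau i) :
    -- (i) aggregate tax emissions hit the cap
    (∑ i, (Ebau i - τ * ρ i)) = A ∧
    -- (ii) aggregate company wealth and regulator wealth under the tax scheme
    (∑ i, (W i - τ * (Ebau i - τ / 2 * ρ i)))
      = (∑ i, W i) - τ * (Etot - τ / 2 * ρtot) ∧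
    -- (iii) spot market scheme: identical outcomes
    (∀ lam : ℝ, τ < lam → (∀ i, lam * ρ i < Ebau i) →
      (τ ∈ Set.Ioc 0 lam ∧
       (∑ i, (Ebau i - τ * ρ i)) = A ∧
       (∀ S ∈ Set.Ioc 0 lam, (∑ i, (Ebau i - S * ρ i)) = A → S = τ)) ∧
      (∀ S : ℝ, S = τ →
        (∀ i, W i - S * (Ebau i - S / 2 * ρ i) = W i - τ * (Ebau i - τ / 2 * ρ i)) ∧
        (∑ i, (Ebau i - S * ρ i)) = A ∧
        S * A = τ * A)) :=
  tax_vs_spot_market_equivalence_general π1 γ hπ1 hγ ρ Ebau W hρ ρtot Etot hρtot hEtot A hA0 hA τ hτ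
end

section
/- With ρ_i = 1/π¹_i + 1/γ_i > 0, E^bau_i = π⁰_i/π¹_i > 0, ρ = Σ_i ρ_i, E^bau = Σ_i E^bau_i, 0 < A, τ = (E^bau − A)/ρ, S = (E^bau − 2A)/ρ, P_i = (S + E^bau_i/ρ_i)/2, E^mar_i = E^bau_i − P_i ρ_i, W^tax_C = Σ_i [W^bau_i − τ(E^bau_i − (τ/2)ρ_i)], W^mar_C = Σ_i [W^bau_i − P_i(E^bau_i − (P_i/2)ρ_i)], W^mar_F = Σ_i (E^mar_i)²/ρ_i, W^tax_R = τA and W^mar_R = SA, the following hold: (i) W^mar_C = W^tax_C − (3/2)W^mar_F + (3/2)A²/ρ; (ii) W^mar_R = W^tax_R − A²/ρ < W^tax_R; (iii) Σ_i (E^mar_i)²/ρ_i ≥ A²/ρ, and consequently W^mar_C ≤ W^tax_C. -/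
set_option maxHeartbeats 1000000


/-- Under the purely intermediated market scheme, with
`W^tax_C, W^mar_C` the aggregate optimal company wealths, `W^mar_F` the
aggregate intermediary wealth, `W^tax_R = τA` and `W^mar_R = SA`:
(i) `W^mar_C = W^tax_C − (3/2)W^mar_F + (3/2)A²/ρ`;
(ii) `W^mar_R = W^tax_R − A²/ρ < W^tax_R`;
(iii) `Σ_i (E^mar_i)²/ρ_i ≥ A²/ρ` and consequently `W^mar_C ≤ W^tax_C`. -/
theorem intermediated_market_aggregate_wealth_comparison
    {ι : Type*} [Fintype ι] [Nonempty ι]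
    (π0 π1 γ : ι → ℝ)
    (hπ0 : ∀ i, 0 < π0 i) (hπ1 : ∀ i, 0 < π1 i) (hγ : ∀ i, 0 < γ i)
    (ρ Ebau W : ι → ℝ)
    (hρ : ∀ i, ρ i = 1 / π1 i + 1 / γ i)
    (hEbau : ∀ i, Ebau i = π0 i / π1 i)
    (hW : ∀ i, W i = (π0 i) ^ 2 / (2 * π1 i))
    (ρtot Etot : ℝ) (hρtot : ρtot = ∑ i, ρ i) (hEtot : Etot = ∑ i, Ebau i)
    (A : ℝ) (hA : 0 < A)
    (τ S : ℝ) (hτ : τ = (Etot - A) / ρtot) (hS : S = (Etot - 2 * A) / ρtot)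
    (P Emar : ι → ℝ)
    (hP : ∀ i, P i = (S + Ebau i / ρ i) / 2)
    (hEmar : ∀ i, Emar i = Ebau i - P i * ρ i)
    (WtaxC WmarC WmarF WtaxR WmarR : ℝ)
    (hWtaxC : WtaxC = ∑ i, (W i - τ * (Ebau i - τ / 2 * ρ i)))
    (hWmarC : WmarC = ∑ i, (W i - P i * (Ebau i - P i / 2 * ρ i)))
    (hWmarF : WmarF = ∑ i, (Emar i) ^ 2 / ρ i)
    (hWtaxR : WtaxR = τ * A) (hWmarR : WmarR = S * A) :
    WmarC = WtaxC - 3 / 2 * WmarF + 3 / 2 * A ^ 2 / ρtot ∧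
    WmarR = WtaxR - A ^ 2 / ρtot ∧
    WmarR < WtaxR ∧
    A ^ 2 / ρtot ≤ ∑ i, (Emar i) ^ 2 / ρ i ∧
    WmarC ≤ WtaxC := by

  have hρpos : ∀ i, 0 < ρ i := fun i => by
    have h1 := hπ1 i; have h2 := hγ i; rw [hρ i]; positivity
  have hρtotpos : 0 < ρtot := by
    rw [hρtot]; exact Finset.sum_pos (fun i _ => hρpos i) Finset.univ_nonempty
  have hρtotne : ρtot ≠ 0 := ne_of_gt hρtotpos
  set Q := ∑ i, (Ebau i) ^ 2 / ρ i with hQ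
  -- closed form of WtaxC
  have hWtaxC' : WtaxC = (∑ i, W i) - τ * Etot + τ ^ 2 / 2 * ρtot := by
    calc WtaxC = ∑ i, (W i - τ * Ebau i + τ ^ 2 / 2 * ρ i) := by
          rw [hWtaxC]; exact Finset.sum_congr rfl fun i _ => by ring
      _ = (∑ i, W i) - τ * Etot + τ ^ 2 / 2 * ρtot := by
          rw [hEtot, hρtot, Finset.sum_add_distrib, Finset.sum_sub_distrib,
            ← Finset.mul_sum, ← Finset.mul_sum]
  -- closed form of WmarC
  have hWmarC' : WmarC = (∑ i, W i) - S / 4 * Etot - 3 / 8 * Q + S ^ 2 / 8 * ρtot := by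
    calc WmarC = ∑ i, (W i - S / 4 * Ebau i - 3 / 8 * ((Ebau i) ^ 2 / ρ i)
          + S ^ 2 / 8 * ρ i) := by
          rw [hWmarC]
          refine Finset.sum_congr rfl fun i _ => ?_
          have h := (hρpos i).ne'
          rw [hP i]; field_simp; ring
      _ = (∑ i, W i) - S / 4 * Etot - 3 / 8 * Q + S ^ 2 / 8 * ρtot := by
          rw [hEtot, hρtot, hQ, Finset.sum_add_distrib, Finset.sum_sub_distrib,
            Finset.sum_sub_distrib, ← Finset.mul_sum, ← Finset.mul_sum, ← Finset.mul_sum]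
  -- closed form of WmarF
  have hWmarF' : WmarF = 1 / 4 * Q - S / 2 * Etot + S ^ 2 / 4 * ρtot := by
    calc WmarF = ∑ i, (1 / 4 * ((Ebau i) ^ 2 / ρ i) - S / 2 * Ebau i
          + S ^ 2 / 4 * ρ i) := by
          rw [hWmarF]
          refine Finset.sum_congr rfl fun i _ => ?_
          have h := (hρpos i).ne'
          rw [hEmar i, hP i]; field_simp; ring
      _ = 1 / 4 * Q - S / 2 * Etot + S ^ 2 / 4 * ρtot := by
          rw [hEtot, hρtot, hQ, Finset.sum_add_distrib, Finset.sum_sub_distrib,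
            ← Finset.mul_sum, ← Finset.mul_sum, ← Finset.mul_sum]
  -- part (i)
  have part1 : WmarC = WtaxC - 3 / 2 * WmarF + 3 / 2 * A ^ 2 / ρtot := by
    rw [hWmarC', hWtaxC', hWmarF', hτ, hS]
    field_simp
    ring
  -- part (ii)
  have part2 : WmarR = WtaxR - A ^ 2 / ρtot := by
    rw [hWmarR, hWtaxR, hτ, hS]
    field_simp
    ring
  have hA2pos : 0 < A ^ 2 / ρtot := by positivity
  have part3 : WmarR < WtaxR := by linarith
  -- part (iii): Cauchy-Schwarz
  have hsumEmar : ∑ i, Emar i = A := by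
    have hSρ : S * ρtot = Etot - 2 * A := by rw [hS]; field_simp
    have : ∑ i, Emar i = ∑ i, (1 / 2 * Ebau i - S / 2 * ρ i) := by
      refine Finset.sum_congr rfl fun i _ => ?_
      have h := (hρpos i).ne'
      rw [hEmar i, hP i]; field_simp; ring
    rw [this, Finset.sum_sub_distrib, ← Finset.mul_sum, ← Finset.mul_sum,
      ← hEtot, ← hρtot]
    nlinarith [hSρ]
  have part4 : A ^ 2 / ρtot ≤ ∑ i, (Emar i) ^ 2 / ρ i := by
    have key := Finset.sum_mul_sq_le_sq_mul_sq Finset.univ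
      (fun i => Emar i / Real.sqrt (ρ i)) (fun i => Real.sqrt (ρ i))
    have h1 : ∀ i, Emar i / Real.sqrt (ρ i) * Real.sqrt (ρ i) = Emar i := fun i => by
      have h0 := hρpos i
      have : Real.sqrt (ρ i) ≠ 0 := by positivity
      field_simp
    have h2 : ∀ i, (Emar i / Real.sqrt (ρ i)) ^ 2 = (Emar i) ^ 2 / ρ i := fun i => by
      rw [div_pow, Real.sq_sqrt (hρpos i).le]
    have h3 : ∀ i, (Real.sqrt (ρ i)) ^ 2 = ρ i := fun i => Real.sq_sqrt (hρpos i).le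
    simp only [h1, h2, h3] at key
    rw [hsumEmar] at key
    rw [div_le_iff₀ hρtotpos]
    calc A ^ 2 ≤ (∑ i, (Emar i) ^ 2 / ρ i) * ∑ i, ρ i := key
      _ = (∑ i, (Emar i) ^ 2 / ρ i) * ρtot := by rw [hρtot]
  have part5 : WmarC ≤ WtaxC := by
    have h := part4
    rw [← hWmarF] at h
    rw [part1]
    have hr : 3 / 2 * A ^ 2 / ρtot = 3 / 2 * (A ^ 2 / ρtot) := by ring
    linarith
  exact ⟨part1, part2, part3, part4, part5⟩
end

section
/- With the notation of the purely intermediated market scheme (ρ_i, E^bau_i, ρ = Σρ_i, E^bau = ΣE^bau_i, 0 < A, τ = (E^bau − A)/ρ, S = (E^bau − 2A)/ρ, P_i = (S + E^bau_i/ρ_i)/2, E^mar_i = E^bau_i − P_iρ_i), define GDP^tax = W^tax_C + W^tax_R and GDP^mar = W^mar_C + W^mar_F + W^mar_R, where W^tax_C, W^mar_C are the aggregate optimal company wealths under the tax and market schemes, W^mar_F = Σ_i (E^mar_i)²/ρ_i is the aggregate intermediary wealth, W^tax_R = τA and W^mar_R = SA. Then: (i) GDP^mar = GDP^tax + (1/2)(A²/ρ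 − Σ_i (E^mar_i)²/ρ_i) ≤ GDP^tax; (ii) W^mar_C + W^mar_R = W^tax_C + W^tax_R + (3/2)(A²/ρ − Σ_i (E^mar_i)²/ρ_i) − A²/ρ < W^tax_C + W^tax_R. -/
/-!
Write `c(p) = p (E - p ρ / 2)` for what a company with business-as-usual emissions `E` and
abatement parameter `ρ` pays, in abatement and certificates, when it faces the price `p`.
Since `c` is quadratic, aggregate costs are `c` evaluated at the aggregate data, and
`c(τ) - c(S) = (3/2) A²/ρ` because `τ - S = A/ρ`. The intermediated price exceeds the spot price
by `E^mar_i/ρ_i`, which costs company `i` an extra `(3/2)(E^mar_i)²/ρ_i`, of which the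
intermediary keeps `(E^mar_i)²/ρ_i`. The regulator loses `(τ - S) A = A²/ρ`. Collecting terms gives
both identities, and the inequalities follow from `A²/ρ ≤ Σ_i (E^mar_i)²/ρ_i`, the Cauchy–Schwarz
inequality applied to `Σ_i E^mar_i = A`.
-/

open Finset

noncomputable def complianceCost (p E ρ : ℝ) : ℝ := p * (E - p / 2 * ρ)

lemma complianceCost_sub (p q E ρ : ℝ) :
    complianceCost p E ρ - complianceCost q E ρ = (p - q) * (E - (p + q) / 2 * ρ) := by
  unfold complianceCost
  ring

lemma sum_complianceCost {ι : Type*} (s : Finset ι) (p : ℝ) (E ρ : ι → ℝ) :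
    ∑ i ∈ s, complianceCost p (E i) (ρ i) = complianceCost p (∑ i ∈ s, E i) (∑ i ∈ s, ρ i) := by
  simp only [complianceCost, mul_sub, mul_sum, sum_sub_distrib]

lemma complianceCost_intermediated {S E ρ : ℝ} (hρ : ρ ≠ 0) :
    complianceCost ((S + E / ρ) / 2) E ρ
      = complianceCost S E ρ + 3 / 2 * ((E - (S + E / ρ) / 2 * ρ) ^ 2 / ρ) := by
  rw [← sub_eq_iff_eq_add', complianceCost_sub]
  field_simp
  ring

lemma complianceCost_tax_sub_spot {E A ρ : ℝ} (hρ : ρ ≠ 0) :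
    complianceCost ((E - A) / ρ) E ρ - complianceCost ((E - 2 * A) / ρ) E ρ
      = 3 / 2 * (A ^ 2 / ρ) := by
  rw [complianceCost_sub]
  field_simp
  ring

lemma sum_complianceCost_intermediated {ι : Type*} (s : Finset ι) {E ρ : ι → ℝ} (S : ℝ)
    (hρ : ∀ i ∈ s, ρ i ≠ 0) :
    ∑ i ∈ s, complianceCost ((S + E i / ρ i) / 2) (E i) (ρ i)
      = complianceCost S (∑ i ∈ s, E i) (∑ i ∈ s, ρ i)
        + 3 / 2 * ∑ i ∈ s, (E i - (S + E i / ρ i) / 2 * ρ i) ^ 2 / ρ i := by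
  rw [← sum_complianceCost, mul_sum, ← sum_add_distrib]
  exact sum_congr rfl fun i hi => complianceCost_intermediated (hρ i hi)

lemma sum_intermediated_emissions {ι : Type*} (s : Finset ι) {E ρ : ι → ℝ} {A S : ℝ}
    (hρ : ∀ i ∈ s, ρ i ≠ 0) (hρs : ∑ i ∈ s, ρ i ≠ 0)
    (hS : S = (∑ i ∈ s, E i - 2 * A) / ∑ i ∈ s, ρ i) :
    ∑ i ∈ s, (E i - (S + E i / ρ i) / 2 * ρ i) = A := by
  have hterm : ∀ i ∈ s, E i - (S + E i / ρ i) / 2 * ρ i = (E i - S * ρ i) / 2 := by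
    intro i hi
    field_simp [hρ i hi]
    ring
  rw [sum_congr rfl hterm, ← sum_div, sum_sub_distrib, ← mul_sum, hS]
  field_simp
  ring

theorem intermediated_market_gdp_comparison_general
    {ι : Type*} [Fintype ι] [Nonempty ι]
    (π1 γ : ι → ℝ)
    (hπ1 : ∀ i, 0 < π1 i) (hγ : ∀ i, 0 < γ i)
    (ρ Ebau W : ι → ℝ)
    (hρ : ∀ i, ρ i = 1 / π1 i + 1 / γ i)
    (ρtot Etot : ℝ) (hρtot : ρtot = ∑ i, ρ i) (hEtot : Etot = ∑ i, Ebau i)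
    (A : ℝ) (hA : 0 < A)
    (τ S : ℝ) (hτ : τ = (Etot - A) / ρtot) (hS : S = (Etot - 2 * A) / ρtot)
    (P Emar : ι → ℝ)
    (hP : ∀ i, P i = (S + Ebau i / ρ i) / 2)
    (hEmar : ∀ i, Emar i = Ebau i - P i * ρ i)
    (WtaxC WmarC WmarF WtaxR WmarR GDPtax GDPmar : ℝ)
    (hWtaxC : WtaxC = ∑ i, (W i - τ * (Ebau i - τ / 2 * ρ i)))
    (hWmarC : WmarC = ∑ i, (W i - P i * (Ebau i - P i / 2 * ρ i)))
    (hWmarF : WmarF = ∑ i, (Emar i) ^ 2 / ρ i)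
    (hWtaxR : WtaxR = τ * A) (hWmarR : WmarR = S * A)
    (hGDPtax : GDPtax = WtaxC + WtaxR)
    (hGDPmar : GDPmar = WmarC + WmarF + WmarR) :
    GDPmar = GDPtax + 1 / 2 * (A ^ 2 / ρtot - ∑ i, (Emar i) ^ 2 / ρ i) ∧
    GDPmar ≤ GDPtax ∧
    WmarC + WmarR
      = WtaxC + WtaxR + 3 / 2 * (A ^ 2 / ρtot - ∑ i, (Emar i) ^ 2 / ρ i)
        - A ^ 2 / ρtot ∧
    WmarC + WmarR < WtaxC + WtaxR := by
  have hρpos : ∀ i, 0 < ρ i := fun i => by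
    rw [hρ i]
    exact add_pos (one_div_pos.2 (hπ1 i)) (one_div_pos.2 (hγ i))
  subst hρtot hEtot
  have hρtot_pos : 0 < ∑ i, ρ i := sum_pos (fun i _ => hρpos i) univ_nonempty
  have hcompanies : WtaxC - WmarC
      = ∑ i, complianceCost (P i) (Ebau i) (ρ i) - complianceCost τ (∑ i, Ebau i) (∑ i, ρ i) := by
    rw [hWtaxC, hWmarC, ← sum_complianceCost, ← sum_sub_distrib, ← sum_sub_distrib]
    exact sum_congr rfl fun i _ => by unfold complianceCost; ring
  have hmar : ∑ i, complianceCost (P i) (Ebau i) (ρ i)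
      = complianceCost S (∑ i, Ebau i) (∑ i, ρ i) + 3 / 2 * WmarF := by
    simp only [hP, hWmarF, hEmar]
    exact sum_complianceCost_intermediated univ S fun i _ => (hρpos i).ne'
  have htax : complianceCost τ (∑ i, Ebau i) (∑ i, ρ i) - complianceCost S (∑ i, Ebau i) (∑ i, ρ i)
      = 3 / 2 * (A ^ 2 / ∑ i, ρ i) := by
    rw [hτ, hS]
    exact complianceCost_tax_sub_spot hρtot_pos.ne'
  have hclearing : ∑ i, Emar i = A := by
    simp only [hEmar, hP]
    exact sum_intermediated_emissions univ (fun i _ => (hρpos i).ne') hρtot_pos.ne' hS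
  have hcauchy : A ^ 2 / ∑ i, ρ i ≤ WmarF := by
    rw [hWmarF, ← hclearing]
    exact sq_sum_div_le_sum_sq_div _ _ fun i _ => hρpos i
  have hregulator : S * A = τ * A - A ^ 2 / ∑ i, ρ i := by
    rw [hS, hτ]
    ring
  have hA2 : 0 < A ^ 2 / ∑ i, ρ i := by positivity
  rw [← hWmarF]
  refine ⟨?_, ?_, ?_, ?_⟩ <;> linarith

/-- Under the purely intermediated market scheme, with
`GDP^tax = W^tax_C + W^tax_R` and `GDP^mar = W^mar_C + W^mar_F + W^mar_R`:
(i) `GDP^mar = GDP^tax + (1/2)(A²/ρ − Σ_i (E^mar_i)²/ρ_i) ≤ GDP^tax`;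
(ii) `W^mar_C + W^mar_R = W^tax_C + W^tax_R
      + (3/2)(A²/ρ − Σ_i (E^mar_i)²/ρ_i) − A²/ρ < W^tax_C + W^tax_R`. -/
theorem intermediated_market_gdp_comparison
    {ι : Type*} [Fintype ι] [Nonempty ι]
    (π0 π1 γ : ι → ℝ)
    (hπ0 : ∀ i, 0 < π0 i) (hπ1 : ∀ i, 0 < π1 i) (hγ : ∀ i, 0 < γ i)
    (ρ Ebau W : ι → ℝ)
    (hρ : ∀ i, ρ i = 1 / π1 i + 1 / γ i)
    (hEbau : ∀ i, Ebau i = π0 i / π1 i)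
    (hW : ∀ i, W i = (π0 i) ^ 2 / (2 * π1 i))
    (ρtot Etot : ℝ) (hρtot : ρtot = ∑ i, ρ i) (hEtot : Etot = ∑ i, Ebau i)
    (A : ℝ) (hA : 0 < A)
    (τ S : ℝ) (hτ : τ = (Etot - A) / ρtot) (hS : S = (Etot - 2 * A) / ρtot)
    (P Emar : ι → ℝ)
    (hP : ∀ i, P i = (S + Ebau i / ρ i) / 2)
    (hEmar : ∀ i, Emar i = Ebau i - P i * ρ i)
    (WtaxC WmarC WmarF WtaxR WmarR GDPtax GDPmar : ℝ)
    (hWtaxC : WtaxC = ∑ i, (W i - τ * (Ebau i - τ / 2 * ρ i)))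
    (hWmarC : WmarC = ∑ i, (W i - P i * (Ebau i - P i / 2 * ρ i)))
    (hWmarF : WmarF = ∑ i, (Emar i) ^ 2 / ρ i)
    (hWtaxR : WtaxR = τ * A) (hWmarR : WmarR = S * A)
    (hGDPtax : GDPtax = WtaxC + WtaxR)
    (hGDPmar : GDPmar = WmarC + WmarF + WmarR) :
    GDPmar = GDPtax + 1 / 2 * (A ^ 2 / ρtot - ∑ i, (Emar i) ^ 2 / ρ i) ∧
    GDPmar ≤ GDPtax ∧
    WmarC + WmarR
      = WtaxC + WtaxR + 3 / 2 * (A ^ 2 / ρtot - ∑ i, (Emar i) ^ 2 / ρ i)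
        - A ^ 2 / ρtot ∧
    WmarC + WmarR < WtaxC + WtaxR :=
  intermediated_market_gdp_comparison_general π1 γ hπ1 hγ ρ Ebau W hρ ρtot Etot hρtot hEtot A hA τ S
    hτ hS P Emar hP hEmar WtaxC WmarC WmarF WtaxR WmarR GDPtax GDPmar hWtaxC hWmarC hWmarF hWtaxR
    hWmarR hGDPtax hGDPmar
end

section
/- Suppose all N companies are identical: π⁰_i = π⁰₁, π¹_i = π¹₁, γ_i = γ₁ for all i, so ρ_i = ρ₁ = 1/π¹₁ + 1/γ₁ and E^bau = N·E^bau₁ with E^bau₁ = π⁰₁/π¹₁. Let 0 < A < E^bau and τ = (E^bau − A)/(Nρ₁). Then under the purely intermediated market scheme: the equilibrium spot price is S = τ − A/(Nρ₁); each intermediated price is P_i = τ; each company's optimal market wealth equals its optimal tax wealth; each intermediary earns W^mar_{F,i} = A²/(N²ρ₁), so W^mar_F = A²/(Nρ₁); the regulator's market wealth satisfies W^mar_R = W^tax_R − W^mar_F with W^tax_R = τA; and consequently the total wealth of companies and regulator satisfies W^mar_C + W^mar_R + W^mar_F = W^tax_C + W^tax_R, i.e. W^mar_C + W^mar_R = W^tax_C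 + W^tax_R − W^mar_F < W^tax_C + W^tax_R. -/
/-- **identical companies.** If all `N` companies share the same
parameters, then under the purely intermediated market scheme with cap
`0 < A < E^bau = N·E^bau₁` and tax rate `τ = (E^bau − A)/(Nρ₁)`:
the equilibrium spot price is `S = τ − A/(Nρ₁)`; each intermediated price is
`P_i = τ`; each company's optimal market wealth equals its optimal tax wealth;
each intermediary earns `A²/(N²ρ₁)` so `W^mar_F = A²/(Nρ₁)`;
`W^mar_R = W^tax_R − W^mar_F` with `W^tax_R = τA`; and
`W^mar_C + W^mar_R + W^mar_F = W^tax_C + W^tax_R`, i.e.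
`W^mar_C + W^mar_R = W^tax_C + W^tax_R − W^mar_F < W^tax_C + W^tax_R`. -/
theorem intermediated_market_identical_companies
    (N : ℕ) (hN : 0 < N)
    (π01 π11 γ1 : ℝ) (hπ01 : 0 < π01) (hπ11 : 0 < π11) (hγ1 : 0 < γ1)
    (ρ1 E1 W1 : ℝ)
    (hρ1 : ρ1 = 1 / π11 + 1 / γ1) (hE1 : E1 = π01 / π11)
    (hW1 : W1 = π01 ^ 2 / (2 * π11))
    (Etot : ℝ) (hEtot : Etot = N * E1)
    (A : ℝ) (hA0 : 0 < A) (hA : A < Etot)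
    (τ : ℝ) (hτ : τ = (Etot - A) / (N * ρ1))
    -- equilibrium values of the purely intermediated market scheme
    (S Pint Emar1 : ℝ)
    (hS : S = (Etot - 2 * A) / (N * ρ1))
    (hPint : Pint = (S + E1 / ρ1) / 2)
    (hEmar1 : Emar1 = E1 - Pint * ρ1)
    (WmarF1 WmarF WtaxC WmarC WtaxR WmarR : ℝ)
    (hWmarF1 : WmarF1 = Emar1 ^ 2 / ρ1)
    (hWmarF : WmarF = N * WmarF1)
    (hWtaxC : WtaxC = N * (W1 - τ * (E1 - τ / 2 * ρ1)))
    (hWmarC : WmarC = N * (W1 - Pint * (E1 - Pint / 2 * ρ1)))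
    (hWtaxR : WtaxR = τ * A)
    (hWmarR : WmarR = S * A) :
    S = τ - A / (N * ρ1) ∧
    Pint = τ ∧
    W1 - Pint * (E1 - Pint / 2 * ρ1) = W1 - τ * (E1 - τ / 2 * ρ1) ∧
    WmarF1 = A ^ 2 / (N ^ 2 * ρ1) ∧
    WmarF = A ^ 2 / (N * ρ1) ∧
    WmarR = WtaxR - WmarF ∧
    WmarC + WmarR + WmarF = WtaxC + WtaxR ∧
    WmarC + WmarR = WtaxC + WtaxR - WmarF ∧
    WmarC + WmarR < WtaxC + WtaxR := by

  have hρ : (0:ℝ) < ρ1 := by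
    rw [hρ1]; positivity
  have hNR : (0:ℝ) < (N:ℝ) := by exact_mod_cast hN
  have hNρ : (N:ℝ) * ρ1 ≠ 0 := by positivity
  have hρ0 : ρ1 ≠ 0 := ne_of_gt hρ
  have hN0 : (N:ℝ) ≠ 0 := ne_of_gt hNR
  have h1 : S = τ - A / (N * ρ1) := by
    rw [hS, hτ]; field_simp; try ring
  have h2 : Pint = τ := by
    rw [hPint, hS, hτ, hEtot]; field_simp; try ring
  have h3 : W1 - Pint * (E1 - Pint / 2 * ρ1) = W1 - τ * (E1 - τ / 2 * ρ1) := by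
    rw [h2]
  have hE : Emar1 = A / N := by
    rw [hEmar1, h2, hτ, hEtot]; field_simp; try ring
  have h4 : WmarF1 = A ^ 2 / (N ^ 2 * ρ1) := by
    rw [hWmarF1, hE]; field_simp; try ring
  have h5 : WmarF = A ^ 2 / (N * ρ1) := by
    rw [hWmarF, h4]; field_simp; try ring
  have h6 : WmarR = WtaxR - WmarF := by
    rw [hWmarR, hWtaxR, h5, h1]; field_simp; try ring
  have hFpos : 0 < WmarF := by rw [h5]; positivity
  have h7 : WmarC + WmarR + WmarF = WtaxC + WtaxR := by
    rw [hWmarC, h3, ← hWtaxC, h6]; ring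
  have h8 : WmarC + WmarR = WtaxC + WtaxR - WmarF := by linarith
  exact ⟨h1, h2, h3, h4, h5, h6, h7, h8, by linarith⟩
end

section
/- In the hybrid market scheme with direct participants c ∈ C and intermediated participants b ∈ B, set ρ = Σ_i ρ_i, E^bau = Σ_i E^bau_i, τ = (E^bau − A)/ρ, S = (2ρτ − Σ_{b∈B} E^bau_b)/(2ρ − Σ_{b∈B} ρ_b), E^mar_b = (E^bau_b − Sρ_b)/2 for b ∈ B, E^mar_c = E^bau_c − Sρ_c and E^tax_c = E^bau_c − τρ_c for c ∈ C. Then: (i) τ − S = (1/ρ)·Σ_{b∈B} E^mar_b; (ii) for every direct participant c ∈ C, its optimal market wealth W^bau_c − S(E^bau_c − (S/2)ρ_c) equals its optimal tax wealth W^bau_c − τ(E^bau_c − (τ/2)ρ_c) plus ((E^tax_c + E^mar_c)/(2ρ))·Σ_{b∈B} E^mar_b. -/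
/-- **hybrid market scheme, direct participants.** With
`τ = (E^bau − A)/ρ`, clearing price
`S = (2ρτ − Σ_{b∈B} E^bau_b)/(2ρ − Σ_{b∈B} ρ_b)`,
`E^mar_b = (E^bau_b − Sρ_b)/2` for `b ∈ B`, and
`E^mar_c = E^bau_c − Sρ_c`, `E^tax_c = E^bau_c − τρ_c` for `c ∈ C`:
(i) `τ − S = (1/ρ)Σ_{b∈B} E^mar_b`;
(ii) every direct participant `c` has market wealth equal to its tax wealth
plus `((E^tax_c + E^mar_c)/(2ρ))·Σ_{b∈B} E^mar_b`. -/
theorem hybrid_market_direct_participant_wealth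
    {ιC ιB : Type*} [Fintype ιC] [Fintype ιB]
    (π0C π1C γC : ιC → ℝ) (π0B π1B γB : ιB → ℝ)
    (hπ0C : ∀ c, 0 < π0C c) (hπ1C : ∀ c, 0 < π1C c) (hγC : ∀ c, 0 < γC c)
    (hπ0B : ∀ b, 0 < π0B b) (hπ1B : ∀ b, 0 < π1B b) (hγB : ∀ b, 0 < γB b)
    (ρC EC WC : ιC → ℝ) (ρB EB : ιB → ℝ)
    (hρC : ∀ c, ρC c = 1 / π1C c + 1 / γC c) (hEC : ∀ c, EC c = π0C c / π1C c)
    (hWC : ∀ c, WC c = (π0C c) ^ 2 / (2 * π1C c))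
    (hρB : ∀ b, ρB b = 1 / π1B b + 1 / γB b) (hEB : ∀ b, EB b = π0B b / π1B b)
    (ρtot Etot : ℝ)
    (hρtot : ρtot = (∑ c, ρC c) + ∑ b, ρB b)
    (hEtot : Etot = (∑ c, EC c) + ∑ b, EB b)
    (A τ S : ℝ)
    (hτ : τ = (Etot - A) / ρtot)
    (hS : S = (2 * ρtot * τ - ∑ b, EB b) / (2 * ρtot - ∑ b, ρB b))
    (EmarB : ιB → ℝ) (hEmarB : ∀ b, EmarB b = (EB b - S * ρB b) / 2)
    (EmarC EtaxC : ιC → ℝ)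
    (hEmarC : ∀ c, EmarC c = EC c - S * ρC c)
    (hEtaxC : ∀ c, EtaxC c = EC c - τ * ρC c) :
    τ - S = (1 / ρtot) * ∑ b, EmarB b ∧
    (∀ c, WC c - S * (EC c - S / 2 * ρC c)
      = (WC c - τ * (EC c - τ / 2 * ρC c))
        + (EtaxC c + EmarC c) / (2 * ρtot) * ∑ b, EmarB b) := by

  have hρCpos : ∀ c, 0 < ρC c := fun c => by
    rw [hρC]; exact add_pos (one_div_pos.mpr (hπ1C c)) (one_div_pos.mpr (hγC c))
  have hρBpos : ∀ b, 0 < ρB b := fun b => by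
    rw [hρB]; exact add_pos (one_div_pos.mpr (hπ1B b)) (one_div_pos.mpr (hγB b))
  have hCnn : (0:ℝ) ≤ ∑ c, ρC c := Finset.sum_nonneg fun i _ => (hρCpos i).le
  have hBnn : (0:ℝ) ≤ ∑ b, ρB b := Finset.sum_nonneg fun i _ => (hρBpos i).le
  by_cases hρ0 : ρtot = 0
  · have hBe : IsEmpty ιB := by
      by_contra h
      rw [not_isEmpty_iff] at h
      obtain ⟨b⟩ := h
      have : 0 < ∑ b, ρB b := Finset.sum_pos (fun i _ => hρBpos i) ⟨b, Finset.mem_univ b⟩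
      linarith [hρtot ▸ hρ0]
    have hCe : IsEmpty ιC := by
      by_contra h
      rw [not_isEmpty_iff] at h
      obtain ⟨c⟩ := h
      have : 0 < ∑ c, ρC c := Finset.sum_pos (fun i _ => hρCpos i) ⟨c, Finset.mem_univ c⟩
      linarith [hρtot ▸ hρ0]
    have h1 : (∑ b, EmarB b) = 0 := by simp [Finset.univ_eq_empty]
    have h2 : (∑ b, EB b) = 0 := by simp [Finset.univ_eq_empty]
    have h3 : (∑ b, ρB b) = 0 := by simp [Finset.univ_eq_empty]
    have hτ0 : τ = 0 := by rw [hτ, hρ0, div_zero]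
    have hS0 : S = 0 := by rw [hS, hρ0, h2, h3]; norm_num
    refine ⟨by rw [hτ0, hS0, h1]; ring, fun c => (hCe.false c).elim⟩
  · have hρpos : 0 < ρtot := lt_of_le_of_ne (by linarith [hρtot]) (Ne.symm hρ0)
    have hD : 2 * ρtot - ∑ b, ρB b ≠ 0 := by
      have : ρtot ≤ 2 * ρtot - ∑ b, ρB b := by linarith [hρtot]
      linarith
    have hSD : S * (2 * ρtot - ∑ b, ρB b) = 2 * ρtot * τ - ∑ b, EB b := by
      rw [hS]; field_simp
    have hsum : ∑ b, EmarB b = ((∑ b, EB b) - S * ∑ b, ρB b) / 2 := by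
      simp only [hEmarB]; rw [← Finset.sum_div, Finset.sum_sub_distrib, ← Finset.mul_sum]
    have hkey : ρtot * (τ - S) = ∑ b, EmarB b := by
      rw [hsum]; linear_combination (-1/2 : ℝ) * hSD
    constructor
    · field_simp
      linear_combination hkey
    · intro c
      rw [hEtaxC, hEmarC, ← hkey]
      field_simp
      ring
end

section
/- In the hybrid market scheme with direct participants c ∈ C and intermediated participants b ∈ B, set ρ = Σ_i ρ_i, E^bau = Σ_i E^bau_i, τ = (E^bau − A)/ρ, S = (2ρτ − Σ_{b∈B} E^bau_b)/(2ρ − Σ_{b∈B} ρ_b), P_b = (S + E^bau_b/ρ_b)/2, E^mar_b = E^bau_b − P_bρ_b = (E^bau_b − Sρ_b)/2 and E^tax_b = E^bau_b − τρ_b. Then for every b ∈ B: (i) P_b = τ/2 + (1/2)(E^bau_b/ρ_b − (1/ρ)Σ_{β∈B} E^mar_β); (ii) the intermediary serving company b earns W^mar_{F,b} = E^mar_b(P_b − S) = (E^mar_b)²/ρ_b; (iii) company b's optimal market wealth W^bau_b − P_b(E^bau_b − (P_b/2)ρ_b) equals its optimal tax wealth W^bau_b − τ(E^bau_b − (τ/2)ρ_b)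 plus ((E^tax_b + E^mar_b)/(2ρ))Σ_{β∈B}E^mar_β − (3/2)(E^mar_b)²/ρ_b + (E^mar_b/(2ρ))Σ_{β∈B}E^mar_β; and (iv) the regulator's market wealth satisfies S·A = τA − (A/ρ)·Σ_{b∈B} E^mar_b. -/
/-- **hybrid market scheme, intermediated participants.** With
`τ = (E^bau − A)/ρ`, clearing price
`S = (2ρτ − Σ_{b∈B} E^bau_b)/(2ρ − Σ_{b∈B} ρ_b)`,
`P_b = (S + E^bau_b/ρ_b)/2`, `E^mar_b = E^bau_b − P_bρ_b = (E^bau_b − Sρ_b)/2`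
and `E^tax_b = E^bau_b − τρ_b`, for every `b ∈ B`:
(i) `P_b = τ/2 + (1/2)(E^bau_b/ρ_b − (1/ρ)Σ_{β∈B} E^mar_β)`;
(ii) the intermediary earns `E^mar_b(P_b − S) = (E^mar_b)²/ρ_b`;
(iii) company `b`'s market wealth equals its tax wealth plus
`((E^tax_b + E^mar_b)/(2ρ))Σ_β E^mar_β − (3/2)(E^mar_b)²/ρ_b
 + (E^mar_b/(2ρ))Σ_β E^mar_β`;
(iv) the regulator's market wealth satisfies `SA = τA − (A/ρ)Σ_{b∈B} E^mar_b`. -/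
theorem hybrid_market_intermediated_participant_wealth
    {ιC ιB : Type*} [Fintype ιC] [Fintype ιB]
    (π0C π1C γC : ιC → ℝ) (π0B π1B γB : ιB → ℝ)
    (hπ0C : ∀ c, 0 < π0C c) (hπ1C : ∀ c, 0 < π1C c) (hγC : ∀ c, 0 < γC c)
    (hπ0B : ∀ b, 0 < π0B b) (hπ1B : ∀ b, 0 < π1B b) (hγB : ∀ b, 0 < γB b)
    (ρC EC : ιC → ℝ) (ρB EB WB : ιB → ℝ)
    (hρC : ∀ c, ρC c = 1 / π1C c + 1 / γC c) (hEC : ∀ c, EC c = π0C c / π1C c)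
    (hρB : ∀ b, ρB b = 1 / π1B b + 1 / γB b) (hEB : ∀ b, EB b = π0B b / π1B b)
    (hWB : ∀ b, WB b = (π0B b) ^ 2 / (2 * π1B b))
    (ρtot Etot : ℝ)
    (hρtot : ρtot = (∑ c, ρC c) + ∑ b, ρB b)
    (hEtot : Etot = (∑ c, EC c) + ∑ b, EB b)
    (A τ S : ℝ)
    (hτ : τ = (Etot - A) / ρtot)
    (hS : S = (2 * ρtot * τ - ∑ b, EB b) / (2 * ρtot - ∑ b, ρB b))
    (Pb EmarB EtaxB : ιB → ℝ)
    (hPb : ∀ b, Pb b = (S + EB b / ρB b) / 2)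
    (hEmarB : ∀ b, EmarB b = EB b - Pb b * ρB b)
    (hEmarB' : ∀ b, EmarB b = (EB b - S * ρB b) / 2)
    (hEtaxB : ∀ b, EtaxB b = EB b - τ * ρB b) :
    (∀ b, Pb b = τ / 2 + 1 / 2 * (EB b / ρB b - (1 / ρtot) * ∑ β, EmarB β)) ∧
    (∀ b, EmarB b * (Pb b - S) = (EmarB b) ^ 2 / ρB b) ∧
    (∀ b, WB b - Pb b * (EB b - Pb b / 2 * ρB b)
      = (WB b - τ * (EB b - τ / 2 * ρB b))
        + (EtaxB b + EmarB b) / (2 * ρtot) * (∑ β, EmarB β)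
        - 3 / 2 * ((EmarB b) ^ 2 / ρB b)
        + EmarB b / (2 * ρtot) * (∑ β, EmarB β)) ∧
    S * A = τ * A - A / ρtot * ∑ b, EmarB b := by
  have hρBpos : ∀ b, 0 < ρB b := fun b => by have h1 := hπ1B b; have h2 := hγB b; rw [hρB b]; positivity
  have hρCpos : ∀ c, 0 < ρC c := fun c => by have h1 := hπ1C c; have h2 := hγC c; rw [hρC c]; positivity
  have hsC : (0:ℝ) ≤ ∑ c, ρC c := Finset.sum_nonneg fun c _ => (hρCpos c).le
  have hsB : (0:ℝ) ≤ ∑ b, ρB b := Finset.sum_nonneg fun b _ => (hρBpos b).le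
  have hsum : ∑ β, EmarB β = ((∑ b, EB b) - S * ∑ b, ρB b) / 2 := by
    simp only [hEmarB']
    rw [Finset.mul_sum, ← Finset.sum_sub_distrib, Finset.sum_div]
  have key : (2 * ρtot - ∑ b, ρB b) ≠ 0 → ρtot * (τ - S) = ∑ β, EmarB β := by
    intro hden
    have hSeq : S * (2 * ρtot - ∑ b, ρB b) = 2 * ρtot * τ - ∑ b, EB b := by
      rw [hS]; field_simp
    rw [hsum]; linarith [hSeq]
  -- positivity of the denominator when ιB is nonempty
  have hposB : ∀ _b : ιB, 0 < ∑ b, ρB b := fun b => by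
    have : Nonempty ιB := ⟨b⟩
    exact Finset.sum_pos (fun b _ => hρBpos b) Finset.univ_nonempty
  have hdenpos : ∀ _b : ιB, 0 < 2 * ρtot - ∑ b, ρB b := fun b => by
    have := hposB b; rw [hρtot]; linarith
  have hρtotpos : ∀ _b : ιB, 0 < ρtot := fun b => by
    have := hposB b; rw [hρtot]; linarith
  refine ⟨?_, ?_, ?_, ?_⟩
  · intro b
    rw [← key ((hdenpos b).ne'), hPb b]
    field_simp [(hρtotpos b).ne', (hρBpos b).ne']
    ring
  · intro b
    rw [hEmarB' b, hPb b]
    field_simp [(hρBpos b).ne']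
    ring
  · intro b
    have hb := (hρBpos b).ne'
    have ht := (hρtotpos b).ne'
    rw [← key ((hdenpos b).ne')]
    obtain ⟨q, hq⟩ : ∃ q, EB b = q * ρB b := ⟨EB b / ρB b, (div_mul_cancel₀ _ hb).symm⟩
    rw [hPb b, hEmarB' b, hEtaxB b, hq, mul_div_cancel_right₀ q hb]
    have hcan : ∀ x y : ℝ, x / (2 * ρtot) * (ρtot * y) = x * y / 2 := by
      intro x y; field_simp
    rw [hcan, hcan]
    have h3 : ((q * ρB b - S * ρB b) / 2) ^ 2 / ρB b = ρB b * (q - S) ^ 2 / 4 := by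
      field_simp; ring
    rw [h3]
    ring
  · by_cases hρ : ρtot = 0
    · have hB0 : ∑ b, ρB b = 0 := by
        by_contra hne
        have : 0 < ∑ b, ρB b := lt_of_le_of_ne hsB (Ne.symm hne)
        have hC0 : ∑ c, ρC c = 0 := by nlinarith [hρtot]
        nlinarith [hρtot]
      have hBempty : IsEmpty ιB := by
        by_contra h
        have : Nonempty ιB := not_isEmpty_iff.mp h
        obtain ⟨b⟩ := this
        exact absurd hB0 (ne_of_gt (hposB b))
      have hτ0 : τ = 0 := by rw [hτ, hρ, div_zero]
      have hS0 : S = 0 := by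
        rw [hS, hρ, hB0]
        simp
      simp [hτ0, hS0, hρ, hBempty, Finset.sum_empty]
    · have hden : 2 * ρtot - ∑ b, ρB b ≠ 0 := by
        have hρpos : 0 < ρtot := by
          rcases lt_or_eq_of_le (by rw [hρtot]; positivity : (0:ℝ) ≤ ρtot) with h | h
          · exact h
          · exact absurd h.symm hρ
        rw [hρtot] at hρpos ⊢
        intro h
        have : ∑ c, ρC c = - ∑ b, ρB b := by linarith
        nlinarith
      rw [← key hden]
      field_simp [hρ]
      ring
end

section
/- In the hybrid market scheme with notation as above (ρ = Σ_iρ_i > 0, intermediated set B with ρ_b > 0 and optimal emissions E^mar_b for b ∈ B, tax rate τ = (E^bau − A)/ρ), define GDP^tax = W^tax_C + W^tax_R and GDP^mar = W^mar_C + W^mar_F + W^mar_R, where W^mar_F = Σ_{b∈B}(E^mar_b)²/ρ_b, W^tax_R = τA and W^mar_R = SA. Then: (i) GDP^mar = GDP^tax + (1/2)((Σ_{b∈B} E^mar_b)²/ρ − Σ_{b∈B}(E^mar_b)²/ρ_b), and since Σ_{b∈B}ρ_b ≤ ρ, the correction term is ≤ 0, so GDP^mar ≤ GDP^tax; (ii)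 W^mar_C + W^mar_R = W^tax_C + W^tax_R + (3/2)((Σ_{b∈B}E^mar_b)²/ρ − Σ_{b∈B}(E^mar_b)²/ρ_b) − (Σ_{b∈B}E^mar_b)²/ρ. -/
/-- **hybrid market scheme, GDP comparison.** With
`GDP^tax = W^tax_C + W^tax_R` and `GDP^mar = W^mar_C + W^mar_F + W^mar_R`,
where `W^mar_F = Σ_{b∈B}(E^mar_b)²/ρ_b`, `W^tax_R = τA`, `W^mar_R = SA`:
(i) `GDP^mar = GDP^tax + (1/2)((Σ_B E^mar_b)²/ρ − Σ_B (E^mar_b)²/ρ_b)`, the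
correction term is `≤ 0` (since `Σ_B ρ_b ≤ ρ`), so `GDP^mar ≤ GDP^tax`;
(ii) `W^mar_C + W^mar_R = W^tax_C + W^tax_R
 + (3/2)((Σ_B E^mar_b)²/ρ − Σ_B(E^mar_b)²/ρ_b) − (Σ_B E^mar_b)²/ρ`. -/
theorem hybrid_market_gdp_comparison
    {ιC ιB : Type*} [Fintype ιC] [Fintype ιB]
    (π0C π1C γC : ιC → ℝ) (π0B π1B γB : ιB → ℝ)
    (hπ0C : ∀ c, 0 < π0C c) (hπ1C : ∀ c, 0 < π1C c) (hγC : ∀ c, 0 < γC c)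
    (hπ0B : ∀ b, 0 < π0B b) (hπ1B : ∀ b, 0 < π1B b) (hγB : ∀ b, 0 < γB b)
    (ρC EC WC : ιC → ℝ) (ρB EB WB : ιB → ℝ)
    (hρC : ∀ c, ρC c = 1 / π1C c + 1 / γC c) (hEC : ∀ c, EC c = π0C c / π1C c)
    (hWC : ∀ c, WC c = (π0C c) ^ 2 / (2 * π1C c))
    (hρB : ∀ b, ρB b = 1 / π1B b + 1 / γB b) (hEB : ∀ b, EB b = π0B b / π1B b)
    (hWB : ∀ b, WB b = (π0B b) ^ 2 / (2 * π1B b))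
    (ρtot Etot : ℝ)
    (hρtot : ρtot = (∑ c, ρC c) + ∑ b, ρB b)
    (hEtot : Etot = (∑ c, EC c) + ∑ b, EB b)
    (A τ S : ℝ)
    (hτ : τ = (Etot - A) / ρtot)
    (hS : S = (2 * (Etot - A) - ∑ b, EB b) / (2 * ρtot - ∑ b, ρB b))
    (Pb EmarB : ιB → ℝ)
    (hPb : ∀ b, Pb b = (S + EB b / ρB b) / 2)
    (hEmarB : ∀ b, EmarB b = (EB b - S * ρB b) / 2)
    (WtaxC WmarC WmarF WtaxR WmarR GDPtax GDPmar : ℝ)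
    (hWtaxC : WtaxC = (∑ c, (WC c - τ * (EC c - τ / 2 * ρC c)))
                      + ∑ b, (WB b - τ * (EB b - τ / 2 * ρB b)))
    (hWmarC : WmarC = (∑ c, (WC c - S * (EC c - S / 2 * ρC c)))
                      + ∑ b, (WB b - Pb b * (EB b - Pb b / 2 * ρB b)))
    (hWmarF : WmarF = ∑ b, (EmarB b) ^ 2 / ρB b)
    (hWtaxR : WtaxR = τ * A) (hWmarR : WmarR = S * A)
    (hGDPtax : GDPtax = WtaxC + WtaxR)
    (hGDPmar : GDPmar = WmarC + WmarF + WmarR) :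
    GDPmar = GDPtax + 1 / 2 * ((∑ b, EmarB b) ^ 2 / ρtot - ∑ b, (EmarB b) ^ 2 / ρB b) ∧
    (∑ b, ρB b) ≤ ρtot ∧
    (∑ b, EmarB b) ^ 2 / ρtot - (∑ b, (EmarB b) ^ 2 / ρB b) ≤ 0 ∧
    GDPmar ≤ GDPtax ∧
    WmarC + WmarR
      = WtaxC + WtaxR
        + 3 / 2 * ((∑ b, EmarB b) ^ 2 / ρtot - ∑ b, (EmarB b) ^ 2 / ρB b)
        - (∑ b, EmarB b) ^ 2 / ρtot := by
  -- positivity of ρ's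
  have hρCpos : ∀ c, 0 < ρC c := fun c => by
    have h1 := hπ1C c; have h2 := hγC c
    rw [hρC]; positivity
  have hρBpos : ∀ b, 0 < ρB b := fun b => by
    have h1 := hπ1B b; have h2 := hγB b
    rw [hρB]; positivity
  have hρCs : (0:ℝ) ≤ ∑ c, ρC c := Finset.sum_nonneg fun c _ => (hρCpos c).le
  have hρBs : (0:ℝ) ≤ ∑ b, ρB b := Finset.sum_nonneg fun b _ => (hρBpos b).le
  have hρBle : (∑ b, ρB b) ≤ ρtot := by rw [hρtot]; linarith
  -- the Cauchy–Schwarz part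
  have hT : (0:ℝ) ≤ ∑ b, (EmarB b) ^ 2 / ρB b :=
    Finset.sum_nonneg fun b _ => div_nonneg (sq_nonneg _) (hρBpos b).le
  by_cases hdeg : ρtot = 0
  · -- degenerate case: both index sets are empty
    have hC : IsEmpty ιC := by
      by_contra h
      rw [not_isEmpty_iff] at h
      obtain ⟨c⟩ := h
      have : 0 < ∑ c, ρC c := Finset.sum_pos (fun c _ => hρCpos c) ⟨c, Finset.mem_univ c⟩
      rw [hρtot] at hdeg; linarith
    have hB : IsEmpty ιB := by
      by_contra h
      rw [not_isEmpty_iff] at h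
      obtain ⟨b⟩ := h
      have : 0 < ∑ b, ρB b := Finset.sum_pos (fun b _ => hρBpos b) ⟨b, Finset.mem_univ b⟩
      rw [hρtot] at hdeg; linarith
    simp only [Finset.univ_eq_empty, Finset.sum_empty] at *
    have hτ0 : τ = 0 := by rw [hτ, hdeg]; simp
    have hS0 : S = 0 := by
      rw [hS, hdeg]; simp
    subst hGDPmar hGDPtax hWmarR hWtaxR hWmarF hWmarC hWtaxC
    rw [hτ0, hS0, hdeg]
    norm_num
  have hρpos : 0 < ρtot := lt_of_le_of_ne (by rw [hρtot]; linarith) (Ne.symm hdeg)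
  have hcs : (∑ b, EmarB b) ^ 2 / ρtot - (∑ b, (EmarB b) ^ 2 / ρB b) ≤ 0 := by
    have h1 : (∑ b, EmarB b) ^ 2 / (∑ b, ρB b) ≤ ∑ b, (EmarB b) ^ 2 / ρB b :=
      Finset.sq_sum_div_le_sum_sq_div _ _ (fun b _ => hρBpos b)
    rcases isEmpty_or_nonempty ιB with hB | hB
    · simp only [Finset.univ_eq_empty, Finset.sum_empty]
      simp [hρpos.le]
    · have hρBspos : 0 < ∑ b, ρB b :=
        Finset.sum_pos (fun b _ => hρBpos b) Finset.univ_nonempty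
      have h2 : (∑ b, EmarB b) ^ 2 / ρtot ≤ (∑ b, EmarB b) ^ 2 / (∑ b, ρB b) :=
        div_le_div_of_nonneg_left (sq_nonneg _) hρBspos hρBle
      linarith
  -- key algebraic relations
  have hden : (0:ℝ) < 2 * ρtot - ∑ b, ρB b := by rw [hρtot]; linarith
  have hSval : S * (2 * ρtot - ∑ b, ρB b) = 2 * (Etot - A) - ∑ b, EB b := by
    rw [hS, div_mul_cancel₀ _ hden.ne']
  have hτval : τ * ρtot = Etot - A := by
    rw [hτ, div_mul_cancel₀ _ hρpos.ne']
  have hQ : ∑ b, EmarB b = ((∑ b, EB b) - S * ∑ b, ρB b) / 2 := by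
    rw [Finset.mul_sum, ← Finset.sum_sub_distrib, Finset.sum_div]
    exact Finset.sum_congr rfl fun b _ => by rw [hEmarB]
  have hkey : ρtot * (τ - S) = ∑ b, EmarB b := by
    linear_combination hτval - hSval / 2 - hQ
  -- expand the four structured sums
  have hA1 : ∑ c, (WC c - τ * (EC c - τ / 2 * ρC c))
      = (∑ c, WC c) - τ * (∑ c, EC c) + τ ^ 2 / 2 * ∑ c, ρC c := by
    rw [Finset.mul_sum, Finset.mul_sum, ← Finset.sum_sub_distrib, ← Finset.sum_add_distrib]
    exact Finset.sum_congr rfl fun c _ => by ring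
  have hA2 : ∑ b, (WB b - τ * (EB b - τ / 2 * ρB b))
      = (∑ b, WB b) - τ * (∑ b, EB b) + τ ^ 2 / 2 * ∑ b, ρB b := by
    rw [Finset.mul_sum, Finset.mul_sum, ← Finset.sum_sub_distrib, ← Finset.sum_add_distrib]
    exact Finset.sum_congr rfl fun b _ => by ring
  have hB1 : ∑ c, (WC c - S * (EC c - S / 2 * ρC c))
      = (∑ c, WC c) - S * (∑ c, EC c) + S ^ 2 / 2 * ∑ c, ρC c := by
    rw [Finset.mul_sum, Finset.mul_sum, ← Finset.sum_sub_distrib, ← Finset.sum_add_distrib]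
    exact Finset.sum_congr rfl fun c _ => by ring
  have hB2 : ∑ b, (WB b - Pb b * (EB b - Pb b / 2 * ρB b))
      = (∑ b, WB b) - S * (∑ b, EB b) + S ^ 2 / 2 * (∑ b, ρB b)
        - 3 / 2 * ∑ b, (EmarB b) ^ 2 / ρB b := by
    have : ∀ b : ιB, WB b - Pb b * (EB b - Pb b / 2 * ρB b)
        = WB b - S * EB b + S ^ 2 / 2 * ρB b - 3 / 2 * ((EmarB b) ^ 2 / ρB b) := by
      intro b
      rw [hPb, hEmarB]
      have hr : ρB b ≠ 0 := (hρBpos b).ne'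
      field_simp
      ring
    rw [Finset.sum_congr rfl fun b _ => this b]
    rw [Finset.mul_sum, Finset.mul_sum, Finset.mul_sum, ← Finset.sum_sub_distrib,
      ← Finset.sum_add_distrib, ← Finset.sum_sub_distrib]
  -- main identity (i)
  have hEtot' : τ * ρtot = ((∑ c, EC c) + ∑ b, EB b) - A := by rw [hτval, hEtot]
  have hmain : GDPmar = GDPtax
      + 1 / 2 * ((∑ b, EmarB b) ^ 2 / ρtot - ∑ b, (EmarB b) ^ 2 / ρB b) := by
    rw [hGDPmar, hGDPtax, hWmarR, hWtaxR, hWmarF, hWmarC, hWtaxC, hA1, hA2, hB1, hB2,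
      ← hkey]
    have h1 : (ρtot * (τ - S)) ^ 2 / ρtot = ρtot * (τ - S) ^ 2 := by
      field_simp
    rw [h1]
    have hρ' : ρtot = (∑ c, ρC c) + ∑ b, ρB b := hρtot
    linear_combination (S - τ) * hEtot' + ((τ ^ 2 - S ^ 2) / 2) * hρ'
  refine ⟨hmain, hρBle, hcs, by linarith, ?_⟩
  -- (ii) follows linearly from (i)
  have := hmain
  rw [hGDPmar, hGDPtax, hWmarF] at this
  linarith
end

section
/- Let X be a positive random variable with continuous distribution function, E[X] = 1 and σ² = E[X²] < ∞. Let π⁰, π¹, γ, λ > 0 and 0 < P < λ, set ρ̂ = 1/π¹ + 1/(γσ²), and assume λρ̂ < π⁰/π¹. Then the expected market wealth π⁰q − (π¹/2)q² − (γσ²/2)((1−e^{−a})q)² − δP − λE[(e^{−a}qX − δ)⁺], maximized over (q, a, δ), is attained at q* = π⁰/π¹ − P·ES_{P/λ}(X)/π¹, e^{−a*} = (π⁰/π¹ − P·ES_{P/λ}(X)·ρ̂)/q*, δ* = VaR_{P/λ}(X)·(π⁰/π¹ − P·ES_{P/λ}(X)·ρ̂), the optimal expected emissions are e^{−a*}q*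 = π⁰/π¹ − P·ES_{P/λ}(X)·ρ̂, and the maximal expected wealth is (π⁰)²/(2π¹) − P·ES_{P/λ}(X)·(π⁰/π¹ − (P·ES_{P/λ}(X)/2)·ρ̂). In particular, the market problem with price P is equivalent to the tax problem with rate τ = P·ES_{P/λ}(X): the latter's objective π⁰q − (π¹/2)q² − (γσ²/2)((1−e^{−a})q)² − τe^{−a}q has the same optimal (q*, a*), expected emissions π⁰/π¹ − τρ̂, and maximal value (π⁰)²/(2π¹) − τ(π⁰/π¹ − (τ/2)ρ̂). -/
open MeasureTheory Real

/-- Value-at-risk at level `ε`: `VaR_ε(X) = inf {y | ℙ[X ≤ y] ≥ 1 − ε}`. -/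
noncomputable def VaR {Ω : Type*} [MeasurableSpace Ω] (μ : Measure Ω)
    (X : Ω → ℝ) (ε : ℝ) : ℝ :=
  sInf {y : ℝ | 1 - ε ≤ (μ {ω | X ω ≤ y}).toReal}

/-- Expected shortfall at level `ε`: `ES_ε(X) = (1/ε)∫₀^ε VaR_u(X) du`. -/
noncomputable def ES {Ω : Type*} [MeasurableSpace Ω] (μ : Measure Ω)
    (X : Ω → ℝ) (ε : ℝ) : ℝ :=
  (1 / ε) * ∫ u in (0 : ℝ)..ε, VaR μ X u

/-!
Put `ε = P / λ`. The quantile function `u ↦ VaR_u(X)` pushes Lebesgue measure on `(0, 1)`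
forward to the law of `X`; integrating over `(0, ε]` gives the Rockafellar–Uryasev formula
`ε·ES_ε(X) = min_c (c·ε + E[(X − c)⁺])`, with the minimum attained at `c = VaR_ε(X)`.
Rescaled by the emission level `e ≥ 0`, the formula shows that the cheapest way to cover the
emissions `e·X` with certificates costs exactly `τ·e`, where `τ = P·ES_ε(X)`, and that
`δ = VaR_ε(X)·e` achieves this. For `e ≤ 0` the bound follows from Jensen's inequality and
`E[X] ≤ ES_ε(X)`. So the market objective lies below the tax objective at rate `τ`, and the two
agree at `δ*`. The tax objective is a concave quadratic in `q` and the abatement `(1 − e^{−a})q`,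
maximized where `π¹q = π⁰ − τ` and `γσ²(1 − e^{−a})q = τ`. Positivity of `X` gives
`ε·ES_ε(X) ≤ E[X] = 1`, so `τ ≤ λ`, and `λρ̂ < π⁰/π¹` then makes the optimal emissions positive.
-/

open Set Filter Topology ProbabilityTheory

theorem StieltjesFunction.le_apply_sInf (f : StieltjesFunction ℝ) {c : ℝ}
    (hne : {y | c ≤ f y}.Nonempty) :
    c ≤ f (sInf {y | c ≤ f y}) := by
  have hright : ∀ y > sInf {y | c ≤ f y}, c ≤ f y := fun y hy => by
    obtain ⟨s, hs, hsy⟩ := exists_lt_of_csInf_lt hne hy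
    exact hs.trans (f.mono hsy.le)
  exact ge_of_tendsto ((f.right_continuous _).mono Ioi_subset_Ici_self)
    (eventually_nhdsWithin_of_forall hright)

theorem mul_ES_eq_setIntegral {Ω : Type*} [MeasurableSpace Ω] (μ : Measure Ω) (X : Ω → ℝ)
    {ε : ℝ} (hε : 0 < ε) : ε * ES μ X ε = ∫ u in Ioc 0 ε, VaR μ X u := by
  rw [ES, intervalIntegral.integral_of_le hε.le, ← mul_assoc, mul_one_div_cancel hε.ne', one_mul]

theorem integral_max_mul_sub_mul {Ω : Type*} [MeasurableSpace Ω] (μ : Measure Ω) (X : Ω → ℝ)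
    {e : ℝ} (he : 0 ≤ e) (c : ℝ) :
    ∫ ω, max (e * X ω - e * c) 0 ∂μ = e * ∫ ω, max (X ω - c) 0 ∂μ := by
  rw [← integral_const_mul]
  congr 1 with ω
  rw [← mul_sub, mul_max_of_nonneg _ _ he, mul_zero]

theorem div_mem_Ioo_zero_one {P lam : ℝ} (hP : 0 < P) (hPlam : P < lam) : P / lam ∈ Ioo 0 1 :=
  ⟨div_pos hP (hP.trans hPlam), (div_lt_one (hP.trans hPlam)).2 hPlam⟩

section Quantile

variable {Ω : Type*} [MeasurableSpace Ω] {μ : Measure Ω} [IsProbabilityMeasure μ] {X : Ω → ℝ}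
  {P lam : ℝ}

theorem cdf_map (hX : Measurable X) (y : ℝ) :
    cdf (μ.map X) y = (μ {ω | X ω ≤ y}).toReal := by
  have := Measure.isProbabilityMeasure_map (μ := μ) hX.aemeasurable
  rw [cdf_eq_real, measureReal_def, Measure.map_apply hX measurableSet_Iic]
  rfl

theorem VaR_eq_sInf_cdf (hX : Measurable X) (u : ℝ) :
    VaR μ X u = sInf {y | 1 - u ≤ cdf (μ.map X) y} := by
  simp only [VaR, cdf_map hX]

theorem VaR_le_iff (hX : Measurable X) {u : ℝ} (hu : u ∈ Ioo 0 1) {y : ℝ} :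
    VaR μ X u ≤ y ↔ 1 - u ≤ cdf (μ.map X) y := by
  obtain ⟨hu0, hu1⟩ := hu
  have hne : {y | 1 - u ≤ cdf (μ.map X) y}.Nonempty :=
    ((tendsto_cdf_atTop (μ := μ.map X)).eventually (lt_mem_nhds (by linarith))).exists.imp
      fun _ => le_of_lt
  have hbdd : BddBelow {y | 1 - u ≤ cdf (μ.map X) y} := by
    obtain ⟨b, hb⟩ := eventually_atBot.1
      ((tendsto_cdf_atBot (μ := μ.map X)).eventually (gt_mem_nhds (by linarith : (0:ℝ) < 1 - u)))
    exact ⟨b, fun s hs => le_of_not_gt fun hsb => (hb s hsb.le).not_ge hs⟩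
  rw [VaR_eq_sInf_cdf hX]
  exact ⟨fun h => ((cdf _).le_apply_sInf hne).trans (monotone_cdf _ h),
    fun h => csInf_le hbdd h⟩

theorem antitoneOn_VaR (hX : Measurable X) : AntitoneOn (VaR μ X) (Ioo 0 1) :=
  fun u hu u' hu' huu' => (VaR_le_iff hX hu').2 <| by
    linarith [(VaR_le_iff hX hu (y := VaR μ X u)).1 le_rfl]

theorem aemeasurable_VaR (hX : Measurable X) :
    AEMeasurable (VaR μ X) (volume.restrict (Ioo 0 1)) :=
  aemeasurable_restrict_of_antitoneOn measurableSet_Ioo (antitoneOn_VaR hX)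

theorem map_VaR_restrict_Ioo (hX : Measurable X) :
    (volume.restrict (Ioo (0:ℝ) 1)).map (VaR μ X) = μ.map X := by
  have := Measure.isProbabilityMeasure_map (μ := μ) hX.aemeasurable
  refine (Measure.ext_of_Iic (μ.map X) _ fun y => ?_).symm
  set F := cdf (μ.map X) y
  have hset : VaR μ X ⁻¹' Iic y ∩ Ioo 0 1 = {u | 1 - F ≤ u} ∩ Ioo 0 1 := by
    ext u
    simp only [mem_inter_iff, mem_preimage, mem_Iic, mem_ofPred_eq]
    exact and_congr_left fun hu => (VaR_le_iff hX hu).trans (by constructor <;> intro <;> linarith)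
  have hF0 : 0 ≤ F := cdf_nonneg _ _
  have hF1 : F ≤ 1 := cdf_le_one _ _
  have hsub₁ : Ioo (1 - F) 1 ⊆ {u | 1 - F ≤ u} ∩ Ioo 0 1 :=
    fun u hu => ⟨hu.1.le, by linarith [hu.1], hu.2⟩
  have hsub₂ : {u | 1 - F ≤ u} ∩ Ioo 0 1 ⊆ Ico (1 - F) 1 := fun u hu => ⟨hu.1, hu.2.2⟩
  rw [Measure.map_apply_of_aemeasurable (aemeasurable_VaR hX) measurableSet_Iic,
    Measure.restrict_apply' measurableSet_Ioo, hset, ← ofReal_cdf (μ := μ.map X)]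
  refine le_antisymm ?_ ?_
  · simpa using measure_mono (μ := volume) hsub₁
  · simpa using measure_mono (μ := volume) hsub₂

theorem setIntegral_comp_VaR (hX : Measurable X) {h : ℝ → ℝ} (hh : Measurable h) :
    ∫ u in Ioo 0 1, h (VaR μ X u) = ∫ ω, h (X ω) ∂μ := by
  rw [← integral_map (aemeasurable_VaR hX) hh.aestronglyMeasurable, map_VaR_restrict_Ioo hX,
    integral_map hX.aemeasurable hh.aestronglyMeasurable]

theorem integrableOn_comp_VaR_iff (hX : Measurable X) {h : ℝ → ℝ} (hh : Measurable h) :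
    IntegrableOn (fun u => h (VaR μ X u)) (Ioo 0 1) ↔ Integrable (fun ω => h (X ω)) μ := by
  change Integrable (h ∘ VaR μ X) _ ↔ Integrable (h ∘ X) μ
  rw [← integrable_map_measure hh.aestronglyMeasurable (aemeasurable_VaR hX),
    map_VaR_restrict_Ioo hX, integrable_map_measure hh.aestronglyMeasurable hX.aemeasurable]

theorem integrableOn_VaR (hX : Measurable X) (hXint : Integrable X μ) :
    IntegrableOn (VaR μ X) (Ioo 0 1) :=
  (integrableOn_comp_VaR_iff hX measurable_id).2 hXint

/-- The Rockafellar–Uryasev inequality. -/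
theorem mul_ES_le (hX : Measurable X) (hXint : Integrable X μ) {ε : ℝ} (hε : ε ∈ Ioo 0 1)
    (c : ℝ) : ε * ES μ X ε ≤ c * ε + ∫ ω, max (X ω - c) 0 ∂μ := by
  have hc : Measurable fun y : ℝ => max (y - c) 0 := by fun_prop
  have hsub : Ioc 0 ε ⊆ Ioo 0 1 := Ioc_subset_Ioo_right hε.2
  have hexcess : IntegrableOn (fun u => max (VaR μ X u - c) 0) (Ioo 0 1) :=
    (integrableOn_comp_VaR_iff hX hc).2 (hXint.sub (integrable_const c)).pos_part
  have hconst : IntegrableOn (fun _ => c) (Ioc (0:ℝ) ε) := integrableOn_const measure_Ioc_lt_top.ne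
  have hVaR := integrableOn_VaR hX hXint
  calc ε * ES μ X ε = ∫ u in Ioc 0 ε, VaR μ X u := mul_ES_eq_setIntegral μ X hε.1
    _ ≤ ∫ u in Ioc 0 ε, (c + max (VaR μ X u - c) 0) :=
        setIntegral_mono_on (hVaR.mono_set hsub)
          (hconst.add (hexcess.mono_set hsub))
          measurableSet_Ioc fun u _ => by linarith [le_max_left (VaR μ X u - c) 0]
    _ = c * ε + ∫ u in Ioc 0 ε, max (VaR μ X u - c) 0 := by
        rw [integral_add hconst (hexcess.mono_set hsub), setIntegral_const]
        simp [hε.1.le, mul_comm]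
    _ ≤ c * ε + ∫ u in Ioo 0 1, max (VaR μ X u - c) 0 :=
        add_le_add le_rfl (setIntegral_mono_set hexcess
          (ae_of_all _ fun _ => le_max_right _ _) hsub.eventuallyLE)
    _ = c * ε + ∫ ω, max (X ω - c) 0 ∂μ := by rw [setIntegral_comp_VaR hX hc]

theorem mul_ES_eq_VaR (hX : Measurable X) (hXint : Integrable X μ) {ε : ℝ} (hε : ε ∈ Ioo 0 1) :
    ε * ES μ X ε = VaR μ X ε * ε + ∫ ω, max (X ω - VaR μ X ε) 0 ∂μ := by
  set v := VaR μ X ε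
  have hsub : Ioc 0 ε ⊆ Ioo 0 1 := Ioc_subset_Ioo_right hε.2
  have hVaR := integrableOn_VaR hX hXint
  have htail : ∀ u ∈ Ioo 0 1 \ Ioc 0 ε, max (VaR μ X u - v) 0 = 0 := fun u ⟨hu, hu'⟩ =>
    max_eq_right <| sub_nonpos.2 <|
      antitoneOn_VaR hX hε hu (le_of_not_ge fun h => hu' ⟨hu.1, h⟩)
  have hhead : EqOn (fun u => max (VaR μ X u - v) 0) (fun u => VaR μ X u - v) (Ioc 0 ε) :=
    fun u hu => max_eq_left <| sub_nonneg.2 <| antitoneOn_VaR hX (hsub hu) hε hu.2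
  rw [← setIntegral_comp_VaR hX (h := fun y => max (y - v) 0) (by fun_prop),
    setIntegral_eq_of_subset_of_forall_sdiff_eq_zero measurableSet_Ioo hsub htail,
    setIntegral_congr_fun measurableSet_Ioc hhead,
    integral_sub (hVaR.mono_set hsub) (integrableOn_const measure_Ioc_lt_top.ne),
    setIntegral_const, mul_ES_eq_setIntegral μ X hε.1]
  simp only [volume_real_Ioc, sub_zero, hε.1.le, sup_of_le_left, smul_eq_mul]
  ring

theorem VaR_le_ES (hX : Measurable X) (hXint : Integrable X μ) {ε : ℝ} (hε : ε ∈ Ioo 0 1) :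
    VaR μ X ε ≤ ES μ X ε := by
  have hsub : Ioc 0 ε ⊆ Ioo 0 1 := Ioc_subset_Ioo_right hε.2
  have hVaR := integrableOn_VaR hX hXint
  refine le_of_mul_le_mul_left ?_ hε.1
  calc ε * VaR μ X ε = ∫ _ in Ioc 0 ε, VaR μ X ε := by simp [hε.1.le]
    _ ≤ ∫ u in Ioc 0 ε, VaR μ X u :=
        setIntegral_mono_on (integrableOn_const measure_Ioc_lt_top.ne) (hVaR.mono_set hsub)
          measurableSet_Ioc fun u hu => antitoneOn_VaR hX (hsub hu) hε hu.2
    _ = ε * ES μ X ε := (mul_ES_eq_setIntegral μ X hε.1).symm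

theorem integral_le_ES (hX : Measurable X) (hXint : Integrable X μ) {ε : ℝ} (hε : ε ∈ Ioo 0 1) :
    ∫ ω, X ω ∂μ ≤ ES μ X ε := by
  have hexcess : ∫ ω, X ω ∂μ - VaR μ X ε ≤ ∫ ω, max (X ω - VaR μ X ε) 0 ∂μ := by
    simpa [integral_sub hXint (integrable_const _)] using
      integral_mono (hXint.sub (integrable_const _)) (hXint.sub (integrable_const _)).pos_part
        fun ω => le_max_left _ _
  nlinarith [mul_ES_eq_VaR hX hXint hε, VaR_le_ES hX hXint hε, hε.2]

theorem mul_ES_le_integral (hX : Measurable X) (hXint : Integrable X μ) (hXnn : 0 ≤ᵐ[μ] X)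
    {ε : ℝ} (hε : ε ∈ Ioo 0 1) : ε * ES μ X ε ≤ ∫ ω, X ω ∂μ := by
  have hpos : (fun ω => max (X ω - 0) 0) =ᵐ[μ] X := by
    filter_upwards [hXnn] with ω hω
    rw [sub_zero]
    exact max_eq_left hω
  have := mul_ES_le hX hXint hε 0
  rwa [zero_mul, zero_add, integral_congr_ae hpos] at this

theorem sq_integral_le_integral_sq (hX : MemLp X 2 μ) :
    (∫ ω, X ω ∂μ) ^ 2 ≤ ∫ ω, X ω ^ 2 ∂μ := by
  have := variance_nonneg X μ
  rw [variance_eq_sub hX] at this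
  simpa using this

theorem ES_mul_le_certificate_cost (hX : Measurable X) (hXint : Integrable X μ) (hP : 0 < P)
    (hPlam : P < lam) (e δ : ℝ) :
    P * ES μ X (P / lam) * e ≤ δ * P + lam * ∫ ω, max (e * X ω - δ) 0 ∂μ := by
  have hlam : 0 < lam := hP.trans hPlam
  have hε := div_mem_Ioo_zero_one hP hPlam
  rcases lt_or_ge 0 e with he | he
  · have hscale := integral_max_mul_sub_mul μ X he.le (δ / e)
    rw [mul_div_cancel₀ δ he.ne'] at hscale
    rw [hscale]
    calc P * ES μ X (P / lam) * e = lam * e * (P / lam * ES μ X (P / lam)) := by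
          field_simp
      _ ≤ lam * e * (δ / e * (P / lam) + ∫ ω, max (X ω - δ / e) 0 ∂μ) := by
          gcongr
          exact mul_ES_le hX hXint hε (δ / e)
      _ = δ * P + lam * (e * ∫ ω, max (X ω - δ / e) 0 ∂μ) := by field_simp
  · have hES := integral_le_ES hX hXint hε
    have hJensen : e * ∫ ω, X ω ∂μ - δ ≤ ∫ ω, max (e * X ω - δ) 0 ∂μ := by
      simpa [integral_sub (hXint.const_mul e) (integrable_const δ), integral_const_mul] using
        integral_mono ((hXint.const_mul e).sub (integrable_const δ))
          ((hXint.const_mul e).sub (integrable_const δ)).pos_part fun ω => le_max_left _ _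
    have hnn : 0 ≤ ∫ ω, max (e * X ω - δ) 0 ∂μ := integral_nonneg fun _ => le_max_right _ _
    have h1 : P * ES μ X (P / lam) * e ≤ P * (∫ ω, X ω ∂μ) * e :=
      mul_le_mul_of_nonpos_right (mul_le_mul_of_nonneg_left hES hP.le) he
    rcases le_total 0 (e * ∫ ω, X ω ∂μ - δ) with h | h <;> nlinarith

theorem ES_mul_eq_certificate_cost (hX : Measurable X) (hXint : Integrable X μ) (hP : 0 < P)
    (hPlam : P < lam) {e : ℝ} (he : 0 ≤ e) :
    P * ES μ X (P / lam) * e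
      = VaR μ X (P / lam) * e * P + lam * ∫ ω, max (e * X ω - VaR μ X (P / lam) * e) 0 ∂μ := by
  have hlam : 0 < lam := hP.trans hPlam
  have hRU := mul_ES_eq_VaR hX hXint (div_mem_Ioo_zero_one hP hPlam)
  have hP' : P = lam * (P / lam) := by field_simp
  set ε := P / lam
  rw [mul_comm (VaR μ X ε) e, integral_max_mul_sub_mul μ X he, hP']
  linear_combination (lam * e) * hRU

theorem mul_ES_mem_Icc (hX : Measurable X) (hXint : Integrable X μ) (hXnn : 0 ≤ᵐ[μ] X)
    (hEX : ∫ ω, X ω ∂μ = 1) (hP : 0 < P) (hPlam : P < lam) :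
    P * ES μ X (P / lam) ∈ Icc P lam := by
  have hε := div_mem_Ioo_zero_one hP hPlam
  refine ⟨le_mul_of_one_le_right hP.le (hEX ▸ integral_le_ES hX hXint hε), ?_⟩
  calc P * ES μ X (P / lam) = lam * (P / lam * ES μ X (P / lam)) := by
        field_simp [(hP.trans hPlam).ne']
    _ ≤ lam := mul_le_of_le_one_right (hP.trans hPlam).le
        (hEX ▸ mul_ES_le_integral hX hXint hXnn hε)

end Quantile

theorem tax_wealth_le {π0 π1 K τ q x q' x' : ℝ} (hπ1 : 0 ≤ π1) (hK : 0 ≤ K)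
    (hq' : π1 * q' = π0 - τ) (hx' : K * ((1 - x') * q') = τ) :
    π0 * q - π1 / 2 * q ^ 2 - K / 2 * ((1 - x) * q) ^ 2 - τ * x * q
      ≤ π0 * q' - π1 / 2 * q' ^ 2 - K / 2 * ((1 - x') * q') ^ 2 - τ * x' * q' := by
  linear_combination (q' - q) * hq' + ((1 - x') * q' - (1 - x) * q) * hx'
    + mul_nonneg hπ1 (sq_nonneg (q - q')) / 2
    + mul_nonneg hK (sq_nonneg ((1 - x) * q - (1 - x') * q')) / 2

theorem tax_wealth_eq {π0 π1 K τ q' x' : ℝ} (hπ1 : 0 < π1) (hK : 0 < K)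
    (hq' : π1 * q' = π0 - τ) (hx' : K * ((1 - x') * q') = τ) :
    π0 * q' - π1 / 2 * q' ^ 2 - K / 2 * ((1 - x') * q') ^ 2 - τ * x' * q'
      = π0 ^ 2 / (2 * π1) - τ * (π0 / π1 - τ / 2 * (1 / π1 + 1 / K)) := by
  have hq : q' = (π0 - τ) / π1 := by field_simp; linarith
  have hs : (1 - x') * q' = τ / K := by field_simp; linarith
  rw [show τ * x' * q' = τ * (q' - (1 - x') * q') by ring, hs, hq]
  field_simp
  ring

theorem tax_first_order_conditions {π0 π1 K τ ρ q' x' : ℝ} (hπ1 : 0 < π1) (hK : 0 < K)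
    (hτ : 0 ≤ τ) (hρ : ρ = 1 / π1 + 1 / K) (hY : 0 < π0 / π1 - τ * ρ)
    (hq' : q' = π0 / π1 - τ / π1) (hx' : x' = (π0 / π1 - τ * ρ) / q') :
    x' * q' = π0 / π1 - τ * ρ ∧ π1 * q' = π0 - τ ∧ K * ((1 - x') * q') = τ := by
  have hqY : q' = π0 / π1 - τ * ρ + τ / K := by rw [hq', hρ]; ring
  have hq0 : 0 < q' := hqY ▸ add_pos_of_pos_of_nonneg hY (div_nonneg hτ hK.le)
  have hemission : x' * q' = π0 / π1 - τ * ρ := by rw [hx', div_mul_cancel₀ _ hq0.ne']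
  refine ⟨hemission, by rw [hq']; field_simp, ?_⟩
  rw [sub_mul, one_mul, hemission, hqY, add_sub_cancel_left, mul_div_cancel₀ _ hK.ne']

theorem market_scheme_random_emissions_maximizer_general
    {Ω : Type*} [MeasurableSpace Ω] (μ : Measure Ω) [IsProbabilityMeasure μ]
    (X : Ω → ℝ) (hXmeas : Measurable X)
    (hXpos : ∀ᵐ ω ∂μ, 0 < X ω)
    (hEX : ∫ ω, X ω ∂μ = 1)
    (hX2int : Integrable (fun ω => X ω ^ 2) μ)
    (σ2 : ℝ) (hσ2 : σ2 = ∫ ω, X ω ^ 2 ∂μ)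
    (π0 π1 γ lam P : ℝ) (hπ1 : 0 < π1) (hγ : 0 < γ)
    (hP : 0 < P) (hPlam : P < lam)
    (ρhat : ℝ) (hρhat : ρhat = 1 / π1 + 1 / (γ * σ2))
    (hass : lam * ρhat < π0 / π1)
    (g : ℝ → ℝ → ℝ → ℝ)
    (hg : ∀ q a δ, g q a δ =
      π0 * q - π1 / 2 * q ^ 2 - γ * σ2 / 2 * ((1 - exp (-a)) * q) ^ 2
        - δ * P - lam * ∫ ω, max (exp (-a) * q * X ω - δ) 0 ∂μ)
    (τ : ℝ) (hτ : τ = P * ES μ X (P / lam))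
    (f : ℝ → ℝ → ℝ)
    (hf : ∀ q a, f q a =
      π0 * q - π1 / 2 * q ^ 2 - γ * σ2 / 2 * ((1 - exp (-a)) * q) ^ 2
        - τ * exp (-a) * q)
    (qstar astar δstar : ℝ)
    (hqstar : qstar = π0 / π1 - P * ES μ X (P / lam) / π1)
    (hastar : exp (-astar) = (π0 / π1 - P * ES μ X (P / lam) * ρhat) / qstar)
    (hδstar : δstar = VaR μ X (P / lam) * (π0 / π1 - P * ES μ X (P / lam) * ρhat)) :
    -- the market objective is maximized at (q*, a*, δ*)
    (∀ q a δ : ℝ, g q a δ ≤ g qstar astar δstar) ∧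
    -- optimal expected emissions
    exp (-astar) * qstar = π0 / π1 - P * ES μ X (P / lam) * ρhat ∧
    -- maximal expected market wealth
    g qstar astar δstar
      = π0 ^ 2 / (2 * π1)
        - P * ES μ X (P / lam)
          * (π0 / π1 - P * ES μ X (P / lam) / 2 * ρhat) ∧
    -- equivalence with the tax problem at rate τ = P·ES_{P/λ}(X)
    (∀ q a : ℝ, f q a ≤ f qstar astar) ∧
    exp (-astar) * qstar = π0 / π1 - τ * ρhat ∧
    f qstar astar = π0 ^ 2 / (2 * π1) - τ * (π0 / π1 - τ / 2 * ρhat) := by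
  have hX2 : MemLp X 2 μ := (memLp_two_iff_integrable_sq hXmeas.aestronglyMeasurable).2 hX2int
  have hXint : Integrable X μ := hX2.integrable one_le_two
  rw [← hτ] at hqstar hastar hδstar ⊢
  obtain ⟨hPτ, hτlam⟩ : τ ∈ Icc P lam :=
    hτ ▸ mul_ES_mem_Icc hXmeas hXint (hXpos.mono fun _ h => h.le) hEX hP hPlam
  have hK : 0 < γ * σ2 := mul_pos hγ (by nlinarith [hσ2 ▸ hEX ▸ sq_integral_le_integral_sq hX2])
  have hY : 0 < π0 / π1 - τ * ρhat := by
    have hρ : 0 < ρhat := by rw [hρhat]; positivity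
    nlinarith [mul_le_mul_of_nonneg_right hτlam hρ.le]
  obtain ⟨hexp, hq, hx⟩ :=
    tax_first_order_conditions hπ1 hK (by linarith) hρhat hY hqstar hastar
  have hf_le : ∀ q a, f q a ≤ f qstar astar := fun q a => by
    rw [hf, hf]; exact tax_wealth_le hπ1.le hK.le hq hx
  have hf_star : f qstar astar = π0 ^ 2 / (2 * π1) - τ * (π0 / π1 - τ / 2 * ρhat) := by
    rw [hf, hρhat]; exact tax_wealth_eq hπ1 hK hq hx
  have hg_le : ∀ q a δ, g q a δ ≤ f q a := fun q a δ => by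
    rw [hg, hf, hτ]
    linarith [ES_mul_le_certificate_cost hXmeas hXint hP hPlam (exp (-a) * q) δ]
  have hg_star : g qstar astar δstar = f qstar astar := by
    rw [hg, hf, hδstar, ← hexp, hτ]
    linarith [ES_mul_eq_certificate_cost hXmeas hXint hP hPlam (hexp ▸ hY.le)]
  exact ⟨fun q a δ => (hg_le q a δ).trans ((hf_le q a).trans hg_star.ge), hexp,
    hg_star.trans hf_star, hf_le, hexp, hf_star⟩

/-- With random emissions `X` (positive, `E[X] = 1`,
`σ² = E[X²] < ∞`, continuous distribution function) and `λρ̂ < π⁰/π¹` where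
`ρ̂ = 1/π¹ + 1/(γσ²)`, the expected market wealth
`π⁰q − (π¹/2)q² − (γσ²/2)((1−e^{−a})q)² − δP − λE[(e^{−a}qX − δ)⁺]`
is maximized at `q* = π⁰/π¹ − P·ES_{P/λ}(X)/π¹`,
`e^{−a*} = (π⁰/π¹ − P·ES_{P/λ}(X)ρ̂)/q*`,
`δ* = VaR_{P/λ}(X)(π⁰/π¹ − P·ES_{P/λ}(X)ρ̂)`, with optimal expected emissions
`e^{−a*}q* = π⁰/π¹ − P·ES_{P/λ}(X)ρ̂` and maximal value
`(π⁰)²/(2π¹) − P·ES_{P/λ}(X)(π⁰/π¹ − (P·ES_{P/λ}(X)/2)ρ̂)`; the market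
problem is equivalent to the tax problem with rate `τ = P·ES_{P/λ}(X)`. -/
theorem market_scheme_random_emissions_maximizer
    {Ω : Type*} [MeasurableSpace Ω] (μ : Measure Ω) [IsProbabilityMeasure μ]
    (X : Ω → ℝ) (hXmeas : Measurable X) (hXint : Integrable X μ)
    (hXpos : ∀ᵐ ω ∂μ, 0 < X ω)
    (hEX : ∫ ω, X ω ∂μ = 1)
    (hX2int : Integrable (fun ω => X ω ^ 2) μ)
    (σ2 : ℝ) (hσ2 : σ2 = ∫ ω, X ω ^ 2 ∂μ)
    (hcont : Continuous fun y : ℝ => (μ {ω | X ω ≤ y}).toReal)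
    (π0 π1 γ lam P : ℝ) (hπ0 : 0 < π0) (hπ1 : 0 < π1) (hγ : 0 < γ)
    (hP : 0 < P) (hPlam : P < lam)
    (ρhat : ℝ) (hρhat : ρhat = 1 / π1 + 1 / (γ * σ2))
    (hass : lam * ρhat < π0 / π1)
    (g : ℝ → ℝ → ℝ → ℝ)
    (hg : ∀ q a δ, g q a δ =
      π0 * q - π1 / 2 * q ^ 2 - γ * σ2 / 2 * ((1 - exp (-a)) * q) ^ 2
        - δ * P - lam * ∫ ω, max (exp (-a) * q * X ω - δ) 0 ∂μ)
    (τ : ℝ) (hτ : τ = P * ES μ X (P / lam))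
    (f : ℝ → ℝ → ℝ)
    (hf : ∀ q a, f q a =
      π0 * q - π1 / 2 * q ^ 2 - γ * σ2 / 2 * ((1 - exp (-a)) * q) ^ 2
        - τ * exp (-a) * q)
    (qstar astar δstar : ℝ)
    (hqstar : qstar = π0 / π1 - P * ES μ X (P / lam) / π1)
    (hastar : exp (-astar) = (π0 / π1 - P * ES μ X (P / lam) * ρhat) / qstar)
    (hδstar : δstar = VaR μ X (P / lam) * (π0 / π1 - P * ES μ X (P / lam) * ρhat)) :
    -- the market objective is maximized at (q*, a*, δ*)
    (∀ q a δ : ℝ, g q a δ ≤ g qstar astar δstar) ∧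
    -- optimal expected emissions
    exp (-astar) * qstar = π0 / π1 - P * ES μ X (P / lam) * ρhat ∧
    -- maximal expected market wealth
    g qstar astar δstar
      = π0 ^ 2 / (2 * π1)
        - P * ES μ X (P / lam)
          * (π0 / π1 - P * ES μ X (P / lam) / 2 * ρhat) ∧
    -- equivalence with the tax problem at rate τ = P·ES_{P/λ}(X)
    (∀ q a : ℝ, f q a ≤ f qstar astar) ∧
    exp (-astar) * qstar = π0 / π1 - τ * ρhat ∧
    f qstar astar = π0 ^ 2 / (2 * π1) - τ * (π0 / π1 - τ / 2 * ρhat) :=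
  market_scheme_random_emissions_maximizer_general μ X hXmeas hXpos hEX hX2int σ2 hσ2 π0 π1 γ lam P
    hπ1 hγ hP hPlam ρhat hρhat hass g hg τ hτ f hf qstar astar δstar hqstar hastar hδstar
end

section
/- Let X be a positive random variable with continuous, strictly increasing distribution function on (0, ∞), E[X] = 1, σ² = E[X²] < ∞, and survival function G. Suppose all N companies are identical, with ρ̂₁ = 1/π¹₁ + 1/(γ₁σ²) and E^bau₁ = π⁰₁/π¹₁, and each faces the same intermediated price P ∈ (0, λ) and spot price S ∈ (0, P). Let 0 < A < Â, τ = (N·E^bau₁ − Â)/(Nρ̂₁), and assume the clearing and targeting conditions: N·VaR_{P/λ}(X)·(E^bau₁ − P·ES_{P/λ}(X)ρ̂₁) = A and N·(E^bau₁ − P·ES_{P/λ}(X)ρ̂₁) = Â. Then: (i) VaR_{P/λ}(X) = A/Â and P = λ·G(A/Â); (ii) P·ES_{P/λ}(X) = τ, so each company's maximal expected market wealth equals its maximal expected tax wealth at rate τ; (iii) the aggregate intermediary wealth is W^mar_F = A·(P − S), and the regulator's expected market wealth (ES_{P/λ}(X) − VaR_{P/λ}(X))·P·Â + S·A equals τ·Â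 − A·(P − S) = W^tax_R − W^mar_F, where W^tax_R = τ·Â. -/
open MeasureTheory

/-! For identical companies, dividing the clearing condition by the targeting condition gives
`VaR_{P/λ}(X) = A/Â`, and solving the targeting condition for `P·ES_{P/λ}(X)` gives exactly the
tax rate `τ`; all wealth identities are then linear algebra. The link `P = λG(A/Â)` holds because,
for a continuous distribution function `F`, the infimum defining `VaR_ε` is attained with
`F(VaR_ε) = 1 − ε` (intermediate value theorem), so the survival function at `VaR_ε` is `ε`. -/

open Filter Set ProbabilityTheory

theorem Continuous.apply_csInf_setOf_le_eq {F : ℝ → ℝ} (hF : Continuous F) {t : ℝ}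
    (hne : ∃ y, t ≤ F y) (hbot : ∀ᶠ y in atBot, F y < t) :
    F (sInf {y | t ≤ F y}) = t := by
  set T := {y | t ≤ F y}
  have hbdd : BddBelow T := by
    obtain ⟨b, hb⟩ := eventually_atBot.mp hbot
    exact ⟨b, fun y hy => not_lt.mp fun hyb => (hb y hyb.le).not_ge hy⟩
  have hmem : t ≤ F (sInf T) :=
    (isClosed_le continuous_const hF).csInf_mem hne hbdd
  obtain ⟨a, hFa, has⟩ := (hbot.and (eventually_le_atBot (sInf T))).exists
  obtain ⟨c, ⟨-, hcs⟩, hFc⟩ :=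
    intermediate_value_Icc has hF.continuousOn ⟨hFa.le, hmem⟩
  rwa [le_antisymm hcs (csInf_le hbdd hFc.ge)] at hFc

section Distribution

variable {Ω : Type*} [MeasurableSpace Ω] {μ : Measure Ω} [IsProbabilityMeasure μ]
  {X : Ω → ℝ}

theorem toReal_measure_le_eq_cdf_map (hX : Measurable X) (y : ℝ) :
    (μ {ω | X ω ≤ y}).toReal = cdf (μ.map X) y := by
  have := Measure.isProbabilityMeasure_map (μ := μ) hX.aemeasurable
  rw [cdf_eq_real, measureReal_def, Measure.map_apply hX measurableSet_Iic]
  rfl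

theorem toReal_measure_le_VaR (hX : Measurable X)
    (hcont : Continuous fun y : ℝ => (μ {ω | X ω ≤ y}).toReal)
    {ε : ℝ} (hε0 : 0 < ε) (hε1 : ε < 1) :
    (μ {ω | X ω ≤ VaR μ X ε}).toReal = 1 - ε := by
  unfold VaR
  simp only [toReal_measure_le_eq_cdf_map hX] at hcont ⊢
  refine hcont.apply_csInf_setOf_le_eq ?_ ?_
  · exact ((tendsto_cdf_atTop _).eventually (eventually_ge_nhds (by linarith))).exists
  · exact (tendsto_cdf_atBot _).eventually (eventually_lt_nhds (by linarith))

theorem toReal_measure_lt_eq_one_sub (hX : Measurable X) (y : ℝ) :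
    (μ {ω | y < X ω}).toReal = 1 - (μ {ω | X ω ≤ y}).toReal := by
  have h := probReal_compl_eq_one_sub (μ := μ) (measurableSet_le hX (measurable_const (a := y)))
  simpa [measureReal_def, compl_ofPred, not_le] using h

theorem toReal_measure_VaR_lt (hX : Measurable X)
    (hcont : Continuous fun y : ℝ => (μ {ω | X ω ≤ y}).toReal)
    {ε : ℝ} (hε0 : 0 < ε) (hε1 : ε < 1) :
    (μ {ω | VaR μ X ε < X ω}).toReal = ε := by
  rw [toReal_measure_lt_eq_one_sub hX, toReal_measure_le_VaR hX hcont hε0 hε1, sub_sub_cancel]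

end Distribution

theorem intermediated_market_random_emissions_identical_companies_general
    {Ω : Type*} [MeasurableSpace Ω] (μ : Measure Ω) [IsProbabilityMeasure μ]
    (X : Ω → ℝ) (hXmeas : Measurable X)
    (σ2 : ℝ) (hσ2 : σ2 = ∫ ω, X ω ^ 2 ∂μ)
    (hcont : Continuous fun y : ℝ => (μ {ω | X ω ≤ y}).toReal)
    (G : ℝ → ℝ) (hG : ∀ t, G t = (μ {ω | t < X ω}).toReal)
    (N : ℕ) (hN : 0 < N)
    (π11 γ1 : ℝ) (hπ11 : 0 < π11) (hγ1 : 0 < γ1)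
    (ρhat1 E1 W1 : ℝ)
    (hρhat1 : ρhat1 = 1 / π11 + 1 / (γ1 * σ2))
    (lam P S : ℝ) (hP0 : 0 < P) (hPlam : P < lam)
    (A Ahat : ℝ) (hA : 0 < A) (hAAhat : A < Ahat)
    (τ : ℝ) (hτ : τ = (N * E1 - Ahat) / (N * ρhat1))
    (hclear : N * (VaR μ X (P / lam) * (E1 - P * ES μ X (P / lam) * ρhat1)) = A)
    (htarget : N * (E1 - P * ES μ X (P / lam) * ρhat1) = Ahat)
    (WmarF WtaxR : ℝ)
    (hWmarF : WmarF
      = N * (VaR μ X (P / lam) * (E1 - P * ES μ X (P / lam) * ρhat1) * (P - S)))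
    (hWtaxR : WtaxR = τ * Ahat) :
    -- (i)
    VaR μ X (P / lam) = A / Ahat ∧
    P = lam * G (A / Ahat) ∧
    -- (ii)
    P * ES μ X (P / lam) = τ ∧
    W1 - P * ES μ X (P / lam) * (E1 - P * ES μ X (P / lam) / 2 * ρhat1)
      = W1 - τ * (E1 - τ / 2 * ρhat1) ∧
    -- (iii)
    WmarF = A * (P - S) ∧
    (ES μ X (P / lam) - VaR μ X (P / lam)) * P * Ahat + S * A
      = τ * Ahat - A * (P - S) ∧
    τ * Ahat - A * (P - S) = WtaxR - WmarF := by
  have hlam : 0 < lam := hP0.trans hPlam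
  have hAhat : Ahat ≠ 0 := (hA.trans hAAhat).ne'
  have hVaR_mul : VaR μ X (P / lam) * Ahat = A := by
    rw [← htarget]; linear_combination hclear
  have hVaR : VaR μ X (P / lam) = A / Ahat := by
    rw [eq_div_iff hAhat, hVaR_mul]
  have hρhat1_pos : 0 < ρhat1 := by
    rw [hρhat1, hσ2]; positivity
  have hPES : P * ES μ X (P / lam) = τ := by
    rw [hτ, eq_div_iff (by positivity), ← htarget]; ring
  refine ⟨hVaR, ?_, hPES, by rw [hPES], ?_, ?_, ?_⟩
  · rw [← hVaR, hG, toReal_measure_VaR_lt hXmeas hcont (div_pos hP0 hlam)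
      ((div_lt_one hlam).mpr hPlam), mul_div_cancel₀ P hlam.ne']
  · rw [hWmarF]; linear_combination (P - S) * hclear
  · linear_combination Ahat * hPES - P * hVaR_mul
  · rw [hWtaxR, hWmarF]; linear_combination (P - S) * hclear

/-- **purely intermediated market with random emissions,
identical companies.** Under the clearing condition
`N·VaR_{P/λ}(X)(E^bau₁ − P·ES_{P/λ}(X)ρ̂₁) = A` and the targeting condition
`N·(E^bau₁ − P·ES_{P/λ}(X)ρ̂₁) = Â`, with `τ = (N·E^bau₁ − Â)/(Nρ̂₁)`:
(i) `VaR_{P/λ}(X) = A/Â` and `P = λG(A/Â)`;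
(ii) `P·ES_{P/λ}(X) = τ`, so each company's maximal expected market wealth
equals its maximal expected tax wealth at rate `τ`;
(iii) `W^mar_F = A(P − S)` and the regulator's expected market wealth
`(ES_{P/λ}(X) − VaR_{P/λ}(X))PÂ + SA = τÂ − A(P − S) = W^tax_R − W^mar_F`. -/
theorem intermediated_market_random_emissions_identical_companies
    {Ω : Type*} [MeasurableSpace Ω] (μ : Measure Ω) [IsProbabilityMeasure μ]
    (X : Ω → ℝ) (hXmeas : Measurable X) (hXint : Integrable X μ)
    (hXpos : ∀ᵐ ω ∂μ, 0 < X ω)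
    (hEX : ∫ ω, X ω ∂μ = 1)
    (hX2int : Integrable (fun ω => X ω ^ 2) μ)
    (σ2 : ℝ) (hσ2 : σ2 = ∫ ω, X ω ^ 2 ∂μ)
    (hcont : Continuous fun y : ℝ => (μ {ω | X ω ≤ y}).toReal)
    (hstrict : StrictMonoOn (fun y : ℝ => (μ {ω | X ω ≤ y}).toReal) (Set.Ioi 0))
    (G : ℝ → ℝ) (hG : ∀ t, G t = (μ {ω | t < X ω}).toReal)
    (N : ℕ) (hN : 0 < N)
    (π01 π11 γ1 : ℝ) (hπ01 : 0 < π01) (hπ11 : 0 < π11) (hγ1 : 0 < γ1)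
    (ρhat1 E1 W1 : ℝ)
    (hρhat1 : ρhat1 = 1 / π11 + 1 / (γ1 * σ2)) (hE1 : E1 = π01 / π11)
    (hW1 : W1 = π01 ^ 2 / (2 * π11))
    (lam P S : ℝ) (hP0 : 0 < P) (hPlam : P < lam) (hS0 : 0 < S) (hSP : S < P)
    (A Ahat : ℝ) (hA : 0 < A) (hAAhat : A < Ahat)
    (τ : ℝ) (hτ : τ = (N * E1 - Ahat) / (N * ρhat1))
    (hclear : N * (VaR μ X (P / lam) * (E1 - P * ES μ X (P / lam) * ρhat1)) = A)
    (htarget : N * (E1 - P * ES μ X (P / lam) * ρhat1) = Ahat)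
    (WmarF WtaxR : ℝ)
    (hWmarF : WmarF
      = N * (VaR μ X (P / lam) * (E1 - P * ES μ X (P / lam) * ρhat1) * (P - S)))
    (hWtaxR : WtaxR = τ * Ahat) :
    -- (i)
    VaR μ X (P / lam) = A / Ahat ∧
    P = lam * G (A / Ahat) ∧
    -- (ii)
    P * ES μ X (P / lam) = τ ∧
    W1 - P * ES μ X (P / lam) * (E1 - P * ES μ X (P / lam) / 2 * ρhat1)
      = W1 - τ * (E1 - τ / 2 * ρhat1) ∧
    -- (iii)
    WmarF = A * (P - S) ∧
    (ES μ X (P / lam) - VaR μ X (P / lam)) * P * Ahat + S * A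
      = τ * Ahat - A * (P - S) ∧
    τ * Ahat - A * (P - S) = WtaxR - WmarF :=
  intermediated_market_random_emissions_identical_companies_general μ X hXmeas σ2 hσ2 hcont G hG N
    hN π11 γ1 hπ11 hγ1 ρhat1 E1 W1 hρhat1 lam P S hP0 hPlam A Ahat hA hAAhat τ hτ hclear htarget
    WmarF WtaxR hWmarF hWtaxR
end
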